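/- arXiv:1201.5135 — 5 statements merged into one kernel-verified Lean document; each statement's English description precedes it below -/
import Mathlib

section
/- If A is a real symmetric positive semidefinite n×n matrix with 0 ≼ A ≼ ε·I for 0 ≤ ε ≤ 1/2, then I + A ≼ exp(A) ≼ I + (1 + 2ε)·A, where exp(A) is the matrix exponential. -/
open Matrix NormedSpace

private lemma scalar_upper {x ε : ℝ} (hx0 : 0 ≤ x) (hxε : x ≤ ε) (hε : ε ≤ 1 / 2) :
    Real.exp x ≤ 1 + (1 + 2 * ε) * x := by
  have hx1 : |x| ≤ 1 := by rw [abs_of_nonneg hx0]; linarith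
  have h := Real.exp_bound hx1 (n := 2) (by norm_num)
  have hsum : ∑ i ∈ Finset.range 2, x ^ i / (Nat.factorial i : ℝ) = 1 + x := by
    simp [Finset.sum_range_succ, Nat.factorial]
  rw [hsum, abs_of_nonneg hx0] at h
  norm_num [Nat.factorial] at h
  have h2 := (abs_le.mp h).2
  nlinarith

/-- If `0 ≼ A ≼ ε • I` with `0 ≤ ε ≤ 1/2`, then `I + A ≼ exp A ≼ I + (1 + 2ε) • A`. -/
theorem matrix_exp_bounds {n : ℕ} (A : Matrix (Fin n) (Fin n) ℝ) (ε : ℝ)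
    (hA : A.PosSemidef) (hAε : (ε • (1 : Matrix (Fin n) (Fin n) ℝ) - A).PosSemidef)
    (hε0 : 0 ≤ ε) (hε : ε ≤ 1 / 2) :
    (exp A - (1 + A)).PosSemidef ∧
      ((1 + (1 + 2 * ε) • A) - exp A).PosSemidef := by
  have hH : A.IsHermitian := hA.1
  set μ := hH.eigenvalues with hμ
  set U : Matrix (Fin n) (Fin n) ℝ := (hH.eigenvectorUnitary : Matrix (Fin n) (Fin n) ℝ) with hU
  have hUU : U * star U = 1 := Matrix.mem_unitaryGroup_iff.mp hH.eigenvectorUnitary.2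
  have hUU' : star U * U = 1 := Matrix.mem_unitaryGroup_iff'.mp hH.eigenvectorUnitary.2
  have hUnit : IsUnit U := isUnit_iff_exists.mpr ⟨star U, hUU, hUU'⟩
  have hUinv : U⁻¹ = star U := Matrix.inv_eq_left_inv hUU'
  -- eigenvalue bounds
  have hμ0 : ∀ i, 0 ≤ μ i := hA.eigenvalues_nonneg
  have hμε : ∀ i, μ i ≤ ε := by
    intro i
    set v : Fin n → ℝ := ⇑(hH.eigenvectorBasis i) with hv
    have h1 : ‖hH.eigenvectorBasis i‖ = 1 := hH.eigenvectorBasis.orthonormal.1 i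
    have h2 : ∑ j, v j ^ 2 = 1 := by
      have h3 := congrArg (· ^ 2) h1
      rw [EuclideanSpace.norm_eq] at h3
      simpa [Real.sq_sqrt (Finset.sum_nonneg fun j _ => sq_nonneg _)] using h3
    have hnorm : v ⬝ᵥ v = 1 := by
      simpa [dotProduct, pow_two] using h2
    have h := hAε.dotProduct_mulVec_nonneg v
    rw [sub_mulVec, smul_mulVec, one_mulVec,
      show A *ᵥ v = μ i • v from hH.mulVec_eigenvectorBasis i, star_trivial] at h
    simp only [dotProduct_sub, dotProduct_smul, hnorm, smul_eq_mul, mul_one] at h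
    linarith
  -- spectral decompositions
  have hAspec : A = U * diagonal μ * star U := by
    have := hH.spectral_theorem
    simpa [hU, hμ] using this
  have hOne : (1 : Matrix (Fin n) (Fin n) ℝ) = U * 1 * star U := by
    rw [mul_one, hUU]
  have hExp : exp A = U * diagonal (fun i => Real.exp (μ i)) * star U := by
    conv_lhs => rw [hAspec, ← hUinv]
    rw [Matrix.exp_conj U (diagonal μ) hUnit, Matrix.exp_diagonal, hUinv]
    congr 2
    rw [Pi.exp_def]
    funext i
    simp [← Real.exp_eq_exp_ℝ]
  constructor
  · have key : exp A - (1 + A) =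
        U * diagonal (fun i => Real.exp (μ i) - (1 + μ i)) * star U := by
      rw [hExp]
      conv_lhs => rw [hAspec, hOne]
      rw [← add_mul, ← Matrix.mul_add, ← sub_mul, ← Matrix.mul_sub]
      congr 2
      ext i j
      rcases eq_or_ne i j with rfl | hij
      · simp [Matrix.sub_apply, Matrix.add_apply, Matrix.one_apply]
      · simp [Matrix.sub_apply, Matrix.add_apply, Matrix.one_apply,
          diagonal_apply_ne _ hij, hij]
    rw [key]
    have hdiag : (diagonal (fun i => Real.exp (μ i) - (1 + μ i))).PosSemidef := by
      refine posSemidef_diagonal_iff.mpr fun i => ?_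
      have := Real.add_one_le_exp (μ i)
      simp only [sub_nonneg]
      linarith
    simpa [Matrix.star_eq_conjTranspose] using hdiag.mul_mul_conjTranspose_same U
  · have key : (1 + (1 + 2 * ε) • A) - exp A =
        U * diagonal (fun i => 1 + (1 + 2 * ε) * μ i - Real.exp (μ i)) * star U := by
      rw [hExp]
      conv_lhs => rw [hAspec, hOne]
      rw [show (1 + 2 * ε) • (U * diagonal μ * star U)
            = U * ((1 + 2 * ε) • diagonal μ) * star U by
          rw [Matrix.mul_smul, Matrix.smul_mul]]
      rw [← add_mul, ← Matrix.mul_add, ← sub_mul, ← Matrix.mul_sub]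
      congr 2
      ext i j
      rcases eq_or_ne i j with rfl | hij
      · simp [Matrix.sub_apply, Matrix.add_apply, Matrix.smul_apply, Matrix.one_apply]
      · simp [Matrix.sub_apply, Matrix.add_apply, Matrix.smul_apply, Matrix.one_apply,
          diagonal_apply_ne _ hij, hij]
    rw [key]
    have hdiag : (diagonal (fun i => 1 + (1 + 2 * ε) * μ i - Real.exp (μ i))).PosSemidef := by
      refine posSemidef_diagonal_iff.mpr fun i => ?_
      have := scalar_upper (hμ0 i) (hμε i) hε
      simp only [sub_nonneg]
      linarith
    simpa [Matrix.star_eq_conjTranspose] using hdiag.mul_mul_conjTranspose_same U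
end

section
/- Let B be an n×n real symmetric PSD matrix with operator norm ‖B‖ ≤ κ, let 0 < ε ≤ 1, and let k = max{⌈e²κ⌉, ⌈ln(2/ε)⌉}. Then the truncated exponential B̂ = ∑_{0 ≤ i < k} Bⁱ/i! satisfies (1 − ε)·exp(B) ≼ B̂ ≼ exp(B) in the Loewner order. -/
open Matrix NormedSpace

private lemma single_pow_div_le_exp (y : ℝ) (hy : 0 ≤ y) (k : ℕ) :
    y ^ k / k.factorial ≤ Real.exp y :=
  calc y ^ k / k.factorial
      ≤ ∑ i ∈ Finset.range (k + 1), y ^ i / i.factorial :=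
        Finset.single_le_sum (f := fun i => y ^ i / (i.factorial : ℝ))
          (fun i _ => by positivity) (Finset.self_mem_range_succ k)
    _ ≤ Real.exp y := Real.sum_le_exp_of_nonneg hy _

private lemma tail_le (x ε : ℝ) (k : ℕ) (hx : 0 ≤ x) (hε0 : 0 < ε)
    (hk1 : Real.exp 1 ^ 2 * x ≤ k) (hk2 : Real.log (2 / ε) ≤ k) (hkpos : 0 < k) :
    Real.exp x - ∑ i ∈ Finset.range k, x ^ i / i.factorial ≤ ε := by
  have he : (0:ℝ) < Real.exp 1 := Real.exp_pos 1
  have he2 : (0:ℝ) < Real.exp 1 ^ 2 := by positivity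
  have hkR : (0:ℝ) < k := by exact_mod_cast hkpos
  have hr : x / k ≤ (Real.exp 1 ^ 2)⁻¹ := by
    rw [div_le_iff₀ hkR, inv_mul_eq_div, le_div_iff₀ he2]
    linarith [hk1]
  have h2e2 : (2:ℝ) ≤ Real.exp 1 ^ 2 := by
    nlinarith [Real.add_one_le_exp (1:ℝ)]
  have hr2 : x / k ≤ 2⁻¹ := hr.trans (by
    rw [inv_le_inv₀ he2 (by norm_num)]; exact h2e2)
  have hrnn : 0 ≤ x / k := div_nonneg hx hkR.le
  have hs := Real.summable_pow_div_factorial x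
  have hsplit := Summable.sum_add_tsum_nat_add k hs
  have hexp : Real.exp x = ∑' i : ℕ, x ^ i / i.factorial := by
    rw [Real.exp_eq_exp_ℝ, exp_eq_tsum_div]
  have htail : Real.exp x - ∑ i ∈ Finset.range k, x ^ i / i.factorial
      = ∑' i : ℕ, x ^ (i + k) / (i + k).factorial := by
    rw [hexp, ← hsplit]; ring
  have hterm : ∀ i : ℕ, x ^ (i + k) / (i + k).factorial
      ≤ (x ^ k / k.factorial) * 2⁻¹ ^ i := by
    intro i
    have hfac : (k.factorial : ℝ) * (k : ℝ) ^ i ≤ ((i + k).factorial : ℝ) := by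
      have : k.factorial * k ^ i ≤ (i + k).factorial := by
        calc k.factorial * k ^ i ≤ k.factorial * (k + 1) ^ i := by
              gcongr; omega
          _ ≤ (k + i).factorial := Nat.factorial_mul_pow_le_factorial
          _ = (i + k).factorial := by rw [Nat.add_comm]
      exact_mod_cast this
    have hden : (0:ℝ) < (k.factorial : ℝ) * (k : ℝ) ^ i := by positivity
    calc x ^ (i + k) / (i + k).factorial
        ≤ x ^ (i + k) / ((k.factorial : ℝ) * (k : ℝ) ^ i) :=
          div_le_div_of_nonneg_left (by positivity) hden hfac
      _ = (x ^ k / k.factorial) * (x / k) ^ i := by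
          rw [div_pow, div_mul_div_comm, pow_add]; ring
      _ ≤ (x ^ k / k.factorial) * 2⁻¹ ^ i :=
          mul_le_mul_of_nonneg_left (pow_le_pow_left₀ hrnn hr2 i) (by positivity)
  have hgs : Summable (fun i : ℕ => (x ^ k / k.factorial) * 2⁻¹ ^ i) :=
    (summable_geometric_of_lt_one (by norm_num) (by norm_num)).mul_left _
  have hts : Summable (fun i : ℕ => x ^ (i + k) / (i + k).factorial) :=
    (summable_nat_add_iff k).2 hs
  have hgeo : ∑' i : ℕ, (x ^ k / k.factorial) * 2⁻¹ ^ i = (x ^ k / k.factorial) * 2 := by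
    rw [tsum_mul_left, tsum_geometric_of_lt_one (by norm_num) (by norm_num)]
    norm_num
  have hxk : x ^ k / k.factorial ≤ (Real.exp (k : ℝ))⁻¹ := by
    have hkk : ((k:ℝ)) ^ k / k.factorial ≤ Real.exp k := single_pow_div_le_exp _ (by positivity) k
    have heq : x ^ k / k.factorial = (x / k) ^ k * (((k:ℝ)) ^ k / k.factorial) := by
      have hknz : ((k:ℝ)) ^ k ≠ 0 := by positivity
      have hfnz : ((k.factorial:ℝ)) ≠ 0 := by positivity
      field_simp
      rw [div_pow, div_mul_cancel₀ _ hknz]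
    rw [heq]
    calc (x / k) ^ k * (((k:ℝ)) ^ k / k.factorial)
        ≤ ((Real.exp 1 ^ 2)⁻¹) ^ k * Real.exp k :=
          mul_le_mul (pow_le_pow_left₀ hrnn hr k) hkk (by positivity) (by positivity)
      _ = (Real.exp (k : ℝ))⁻¹ := by
          rw [← Real.exp_one_pow, ← mul_pow, ← inv_pow, ← inv_pow]
          congr 1
          rw [pow_two]
          field_simp
  have hek : (2:ℝ) / ε ≤ Real.exp (k : ℝ) := by
    calc (2:ℝ) / ε = Real.exp (Real.log (2 / ε)) := by
          rw [Real.exp_log (by positivity)]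
      _ ≤ Real.exp (k : ℝ) := Real.exp_le_exp.2 hk2
  have hfin : (Real.exp (k : ℝ))⁻¹ * 2 ≤ ε := by
    have hep : (0:ℝ) < Real.exp (k : ℝ) := Real.exp_pos _
    rw [div_le_iff₀ hε0] at hek
    rw [inv_mul_le_iff₀ hep]
    nlinarith
  calc Real.exp x - ∑ i ∈ Finset.range k, x ^ i / i.factorial
      = ∑' i : ℕ, x ^ (i + k) / (i + k).factorial := htail
    _ ≤ ∑' i : ℕ, (x ^ k / k.factorial) * 2⁻¹ ^ i := Summable.tsum_le_tsum hterm hts hgs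
    _ = (x ^ k / k.factorial) * 2 := hgeo
    _ ≤ (Real.exp (k : ℝ))⁻¹ * 2 := by gcongr
    _ ≤ ε := hfin

private lemma diagonal_sum_smul {n : ℕ} (k : ℕ) (c : ℕ → ℝ) (f : ℕ → Fin n → ℝ) :
    ∑ i ∈ Finset.range k, c i • Matrix.diagonal (f i)
      = Matrix.diagonal (fun j => ∑ i ∈ Finset.range k, c i * f i j) := by
  induction k with
  | zero => simp
  | succ m ih =>
      rw [Finset.sum_range_succ, ih, ← Matrix.diagonal_smul, Matrix.diagonal_add]
      congr 1
      funext j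
      simp [Finset.sum_range_succ]

private lemma conj_mul_conj {n : ℕ} (U A C : Matrix (Fin n) (Fin n) ℝ)
    (h : star U * U = 1) :
    (U * A * star U) * (U * C * star U) = U * (A * C) * star U := by
  simp only [Matrix.mul_assoc]
  rw [← Matrix.mul_assoc (star U) U (C * star U), h, Matrix.one_mul]

/-- Truncated-exponential approximation (Arora–Kale, Lemma 6): if `B` is symmetric PSD
with spectral norm at most `κ` (expressed via its eigenvalues), `0 < ε ≤ 1`, and
`k = max ⌈e² κ⌉ ⌈ln (2/ε)⌉`, then the degree-`< k` Taylor truncation `B̂` of `exp B`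
satisfies `(1 - ε) • exp B ≼ B̂ ≼ exp B`. -/
theorem truncated_exp_approx {n : ℕ} (B : Matrix (Fin n) (Fin n) ℝ) (κ ε : ℝ)
    (hB : B.PosSemidef) (hκ : ∀ i, hB.1.eigenvalues i ≤ κ)
    (hε0 : 0 < ε) (hε1 : ε ≤ 1)
    (k : ℕ) (hk : k = max ⌈Real.exp 1 ^ 2 * κ⌉₊ ⌈Real.log (2 / ε)⌉₊) :
    ((∑ i ∈ Finset.range k, ((i.factorial : ℝ)⁻¹) • B ^ i) - (1 - ε) • exp B).PosSemidef ∧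
      (exp B - ∑ i ∈ Finset.range k, ((i.factorial : ℝ)⁻¹) • B ^ i).PosSemidef := by
  classical
  have H : B.IsHermitian := hB.1
  set U : Matrix (Fin n) (Fin n) ℝ := (H.eigenvectorUnitary : Matrix (Fin n) (Fin n) ℝ) with hUdef
  set μ : Fin n → ℝ := H.eigenvalues with hμdef
  have hUU : star U * U = 1 := Unitary.coe_star_mul_self _
  have hUU' : U * star U = 1 := Unitary.coe_mul_star_self _
  have hspec : B = U * Matrix.diagonal μ * star U := by
    have h := H.spectral_theorem
    rwa [RCLike.ofReal_real_eq_id, Function.id_comp] at h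
  -- powers
  have hpow : ∀ i : ℕ, B ^ i = U * Matrix.diagonal (fun j => μ j ^ i) * star U := by
    intro i
    induction i with
    | zero =>
      simp only [pow_zero]
      rw [Matrix.diagonal_one, Matrix.mul_one, hUU']
    | succ i ih =>
      rw [pow_succ, ih, hspec, conj_mul_conj _ _ _ hUU, Matrix.diagonal_mul_diagonal]
      congr 1
  -- truncated sum
  have hsum : (∑ i ∈ Finset.range k, ((i.factorial : ℝ)⁻¹) • B ^ i)
      = U * Matrix.diagonal (fun j => ∑ i ∈ Finset.range k, (i.factorial : ℝ)⁻¹ * μ j ^ i)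
        * star U := by
    calc (∑ i ∈ Finset.range k, ((i.factorial : ℝ)⁻¹) • B ^ i)
        = ∑ i ∈ Finset.range k,
            U * (((i.factorial : ℝ)⁻¹) • Matrix.diagonal (fun j => μ j ^ i)) * star U := by
          refine Finset.sum_congr rfl fun i _ => ?_
          rw [hpow i, mul_smul_comm, smul_mul_assoc]
      _ = U * (∑ i ∈ Finset.range k,
            ((i.factorial : ℝ)⁻¹) • Matrix.diagonal (fun j => μ j ^ i)) * star U := by
          rw [← Finset.sum_mul, ← Finset.mul_sum]
      _ = _ := by
          rw [diagonal_sum_smul]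
  -- exponential
  have hexpB : exp B = U * Matrix.diagonal (fun j => Real.exp (μ j)) * star U := by
    have hu := Matrix.exp_units_conj (Unitary.toUnits H.eigenvectorUnitary)
      (Matrix.diagonal μ)
    have hcoe : ((Unitary.toUnits H.eigenvectorUnitary : (Matrix (Fin n) (Fin n) ℝ)ˣ) :
        Matrix (Fin n) (Fin n) ℝ) = U := rfl
    have hcoeinv : (((Unitary.toUnits H.eigenvectorUnitary)⁻¹ :
        (Matrix (Fin n) (Fin n) ℝ)ˣ) : Matrix (Fin n) (Fin n) ℝ) = star U := rfl
    rw [hcoe, hcoeinv] at hu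
    rw [hspec, hu, Matrix.exp_diagonal, Pi.exp_def]
    congr 1
    congr 1
    funext j
    rw [Real.exp_eq_exp_ℝ]
  -- eigenvalue bounds and k bounds
  have hμ0 : ∀ j, 0 ≤ μ j := fun j => hB.eigenvalues_nonneg j
  have hk1 : ∀ j, Real.exp 1 ^ 2 * μ j ≤ (k : ℝ) := by
    intro j
    calc Real.exp 1 ^ 2 * μ j ≤ Real.exp 1 ^ 2 * κ := by
          have := hκ j
          nlinarith [pow_pos (Real.exp_pos 1) 2]
      _ ≤ (⌈Real.exp 1 ^ 2 * κ⌉₊ : ℝ) := Nat.le_ceil _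
      _ ≤ (k : ℝ) := by
          have : ⌈Real.exp 1 ^ 2 * κ⌉₊ ≤ k := hk ▸ le_max_left _ _
          exact_mod_cast this
  have hk2 : Real.log (2 / ε) ≤ (k : ℝ) := by
    calc Real.log (2 / ε) ≤ (⌈Real.log (2 / ε)⌉₊ : ℝ) := Nat.le_ceil _
      _ ≤ (k : ℝ) := by
          have : ⌈Real.log (2 / ε)⌉₊ ≤ k := hk ▸ le_max_right _ _
          exact_mod_cast this
  have hkpos : 0 < k := by
    rw [hk]
    have h1 : (0:ℝ) < Real.log (2 / ε) := by
      apply Real.log_pos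
      rw [lt_div_iff₀ hε0]
      linarith
    have : 1 ≤ ⌈Real.log (2 / ε)⌉₊ := by
      rw [Nat.one_le_ceil_iff]; exact h1
    omega
  -- scalar facts
  have hupper : ∀ j, ∑ i ∈ Finset.range k, (i.factorial : ℝ)⁻¹ * μ j ^ i ≤ Real.exp (μ j) := by
    intro j
    have := Real.sum_le_exp_of_nonneg (hμ0 j) k
    calc ∑ i ∈ Finset.range k, (i.factorial : ℝ)⁻¹ * μ j ^ i
        = ∑ i ∈ Finset.range k, μ j ^ i / i.factorial := by
          refine Finset.sum_congr rfl fun i _ => ?_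
          rw [div_eq_mul_inv, mul_comm]
      _ ≤ Real.exp (μ j) := this
  have hlower : ∀ j, (1 - ε) * Real.exp (μ j)
      ≤ ∑ i ∈ Finset.range k, (i.factorial : ℝ)⁻¹ * μ j ^ i := by
    intro j
    have ht := tail_le (μ j) ε k (hμ0 j) hε0 (hk1 j) hk2 hkpos
    have hsum_eq : ∑ i ∈ Finset.range k, (i.factorial : ℝ)⁻¹ * μ j ^ i
        = ∑ i ∈ Finset.range k, μ j ^ i / i.factorial := by
      refine Finset.sum_congr rfl fun i _ => ?_
      rw [div_eq_mul_inv, mul_comm]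
    have hexp1 : 1 ≤ Real.exp (μ j) := Real.one_le_exp (hμ0 j)
    have : ε ≤ ε * Real.exp (μ j) := by nlinarith
    rw [hsum_eq]
    nlinarith
  -- conclude
  constructor
  · have heq : (∑ i ∈ Finset.range k, ((i.factorial : ℝ)⁻¹) • B ^ i) - (1 - ε) • exp B
        = U * Matrix.diagonal (fun j =>
            (∑ i ∈ Finset.range k, (i.factorial : ℝ)⁻¹ * μ j ^ i)
              - (1 - ε) * Real.exp (μ j)) * star U := by
      rw [hsum, hexpB, ← smul_mul_assoc, ← mul_smul_comm, ← Matrix.sub_mul, ← Matrix.mul_sub,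
        ← Matrix.diagonal_smul, ← Matrix.diagonal_sub]
      have hfun : ((1 - ε) • fun j => Real.exp (μ j)) = fun j => (1 - ε) * Real.exp (μ j) := by
        funext j; simp
      rw [hfun]
    rw [heq]
    have : (Matrix.diagonal (fun j =>
        (∑ i ∈ Finset.range k, (i.factorial : ℝ)⁻¹ * μ j ^ i)
          - (1 - ε) * Real.exp (μ j))).PosSemidef :=
      Matrix.posSemidef_diagonal_iff.mpr fun j => by linarith [hlower j]
    have h2 := this.mul_mul_conjTranspose_same U
    rwa [← Matrix.star_eq_conjTranspose] at h2
  · have heq : exp B - (∑ i ∈ Finset.range k, ((i.factorial : ℝ)⁻¹) • B ^ i)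
        = U * Matrix.diagonal (fun j =>
            Real.exp (μ j) - ∑ i ∈ Finset.range k, (i.factorial : ℝ)⁻¹ * μ j ^ i) * star U := by
      rw [hsum, hexpB, ← Matrix.sub_mul, ← Matrix.mul_sub, ← Matrix.diagonal_sub]
    rw [heq]
    have : (Matrix.diagonal (fun j =>
        Real.exp (μ j) - ∑ i ∈ Finset.range k, (i.factorial : ℝ)⁻¹ * μ j ^ i)).PosSemidef :=
      Matrix.posSemidef_diagonal_iff.mpr fun j => by linarith [hupper j]
    have h2 := this.mul_mul_conjTranspose_same U
    rwa [← Matrix.star_eq_conjTranspose] at h2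
end

section
/- (Infeasibility certificate) Let A₁, …, Aₙ be n×n real symmetric PSD matrices and ε > 0, K > 0. Suppose P is a symmetric PSD matrix with trace(P) = 1 and P ⬝ A_i ≥ (1+ε)² for all i. Then there is no x ∈ ℝⁿ with x ≥ 0, 1ᵀx ≥ (1+ε)K, and ∑_i x_i A_i ≼ K·I. -/
open Matrix

lemma psd_trace_nonneg' {n : ℕ} {A : Matrix (Fin n) (Fin n) ℝ} (hA : A.PosSemidef) :
    0 ≤ A.trace := by
  rw [Matrix.trace]
  apply Finset.sum_nonneg
  intro i _
  have := hA.dotProduct_mulVec_nonneg (Pi.single i 1)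
  simpa [dotProduct, Matrix.mulVec, Pi.single_apply, Finset.mul_sum] using this

lemma trace_mul_psd_nonneg {n : ℕ} {P M : Matrix (Fin n) (Fin n) ℝ}
    (hP : P.PosSemidef) (hM : M.PosSemidef) : 0 ≤ (P * M).trace := by
  obtain ⟨C, rfl⟩ : ∃ C : Matrix (Fin n) (Fin n) ℝ, M = Cᴴ * C := by
    open MatrixOrder in
    simpa [star_eq_conjTranspose] using CStarAlgebra.nonneg_iff_eq_star_mul_self.mp hM.nonneg
  have h : (P * (Cᴴ * C)).trace = (C * P * Cᴴ).trace := by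
    rw [← Matrix.mul_assoc, Matrix.trace_mul_cycle]
  rw [h]
  exact psd_trace_nonneg' (hP.mul_mul_conjTranspose_same C)

/-- Infeasibility certificate: if `P` is PSD with `trace P = 1` and
`P ⬝ A_i ≥ (1+ε)²` for all `i`, then there is no `x ≥ 0` with `1ᵀ x ≥ (1+ε) K` and
`∑ i, x_i • A_i ≼ K • I`. -/
theorem infeasibility_certificate {n : ℕ} (A : Fin n → Matrix (Fin n) (Fin n) ℝ)
    (P : Matrix (Fin n) (Fin n) ℝ) (ε K : ℝ)
    (hε : 0 < ε) (hK : 0 < K)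
    (hA : ∀ i, (A i).PosSemidef) (hP : P.PosSemidef) (hPtr : P.trace = 1)
    (hPA : ∀ i, (1 + ε) ^ 2 ≤ (P * A i).trace) :
    ¬ ∃ x : Fin n → ℝ, (∀ i, 0 ≤ x i) ∧ (1 + ε) * K ≤ ∑ i, x i ∧
      (K • (1 : Matrix (Fin n) (Fin n) ℝ) - ∑ i, x i • A i).PosSemidef := by
  rintro ⟨x, hx, hsum, hpsd⟩
  have h0 : 0 ≤ (P * (K • (1 : Matrix (Fin n) (Fin n) ℝ) - ∑ i, x i • A i)).trace :=
    trace_mul_psd_nonneg hP hpsd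
  have hexp : (P * (K • (1 : Matrix (Fin n) (Fin n) ℝ) - ∑ i, x i • A i)).trace
      = K - ∑ i, x i * (P * A i).trace := by
    rw [Matrix.mul_sub, Matrix.trace_sub, Matrix.mul_smul, Matrix.mul_one,
      Matrix.trace_smul, hPtr, Finset.mul_sum, Matrix.trace_sum]
    simp [Matrix.mul_smul, Matrix.trace_smul]
  rw [hexp, sub_nonneg] at h0
  have hlow : (1 + ε) ^ 2 * ((1 + ε) * K) ≤ ∑ i, x i * (P * A i).trace := by
    calc (1 + ε) ^ 2 * ((1 + ε) * K) ≤ (1 + ε) ^ 2 * ∑ i, x i := by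
          apply mul_le_mul_of_nonneg_left hsum (by positivity)
      _ = ∑ i, x i * (1 + ε) ^ 2 := by rw [Finset.mul_sum]; congr 1; ext i; ring
      _ ≤ ∑ i, x i * (P * A i).trace := by
          apply Finset.sum_le_sum
          intro i _
          exact mul_le_mul_of_nonneg_left (hPA i) (hx i)
  have hgt : K < (1 + ε) ^ 2 * ((1 + ε) * K) := by nlinarith [mul_pos hε hK, mul_pos (mul_pos hε hε) hK, mul_pos (mul_pos (mul_pos hε hε) hε) hK]
  linarith
end

section
/- (Matrix multiplicative weights regret bound) Fix 0 < ε ≤ 1/2 and let M⁽¹⁾, …, M⁽ᵀ⁾ be n×n real symmetric matrices with 0 ≼ M⁽ᵗ⁾ ≼ I. Define Ψ⁽⁰⁾ = 0, Ψ⁽ᵗ⁾ = ε·∑_{τ≤t} M⁽ᵗ⁾, W⁽ᵗ⁾ = exp(Ψ⁽ᵗ⁻¹⁾), and P⁽ᵗ⁾ = W⁽ᵗ⁾/trace(W⁽ᵗ⁾). Then (1+2ε)·∑_{t=1}^T M⁽ᵗ⁾ ⬝ P⁽ᵗ⁾ ≥ λ_max(∑_{t=1}^T M⁽ᵗ⁾)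 − (ln n)/ε. -/
open Matrix NormedSpace

set_option maxHeartbeats 1000000

namespace MMWU

variable {n : ℕ}

local notation "Mat" => Matrix (Fin n) (Fin n) ℝ

attribute [local instance] Matrix.linftyOpNormedRing Matrix.linftyOpNormedAlgebra


lemma psd_smul {M : Mat} (hM : M.PosSemidef) {c : ℝ} (hc : 0 ≤ c) :
    (c • M).PosSemidef := by
  refine Matrix.PosSemidef.of_dotProduct_mulVec_nonneg ?_ fun x => ?_
  · unfold Matrix.IsHermitian
    rw [conjTranspose_smul, hM.1]
    simp
  · rw [smul_mulVec, dotProduct_smul]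
    exact mul_nonneg hc (hM.dotProduct_mulVec_nonneg x)

lemma psd_sum {T : ℕ} {M : ℕ → Mat} (hM : ∀ t, (M t).PosSemidef) :
    (∑ t ∈ Finset.range T, M t).PosSemidef := by
  induction T with
  | zero => simp [Matrix.PosSemidef.zero]
  | succ T ih => rw [Finset.sum_range_succ]; exact ih.add (hM T)

lemma psd_trace_nonneg {R : Mat} (hR : R.PosSemidef) : 0 ≤ R.trace := by
  apply Finset.sum_nonneg
  intro i _
  have := hR.dotProduct_mulVec_nonneg (Pi.single i 1)
  simpa [dotProduct, Matrix.mulVec, Pi.single_apply] using this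

/-- trace of product of psd matrices is nonneg -/
lemma spec_thm {S : Mat} (hS : S.IsHermitian) :
    S = (hS.eigenvectorUnitary : Mat) * Matrix.diagonal hS.eigenvalues *
      star (hS.eigenvectorUnitary : Mat) := by
  conv_lhs => rw [hS.spectral_theorem, Unitary.conjStarAlgAut_apply]
  simp [RCLike.ofReal_real_eq_id]

lemma psd_exists_sqrt {Q : Mat} (hQ : Q.PosSemidef) : ∃ R : Mat, R.IsHermitian ∧ R * R = Q := by
  set U : Mat := (hQ.1.eigenvectorUnitary : Mat) with hU
  have hUU : star U * U = 1 := Matrix.mem_unitaryGroup_iff'.mp hQ.1.eigenvectorUnitary.2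
  set D : Mat := Matrix.diagonal (fun i => Real.sqrt (hQ.1.eigenvalues i)) with hD
  refine ⟨U * D * star U, ?_, ?_⟩
  · unfold Matrix.IsHermitian
    simp [Matrix.conjTranspose_mul, Matrix.mul_assoc, D, Matrix.star_eq_conjTranspose]
  · have h : D * D = Matrix.diagonal hQ.1.eigenvalues := by
      rw [hD, Matrix.diagonal_mul_diagonal]
      congr 1
      funext i
      exact Real.mul_self_sqrt (hQ.eigenvalues_nonneg i)
    conv_rhs => rw [spec_thm hQ.1]
    calc U * D * star U * (U * D * star U) = U * (D * (star U * U) * D) * star U := by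
          simp only [Matrix.mul_assoc]
      _ = _ := by rw [hUU, Matrix.mul_one, h]

lemma trace_mul_psd_nonneg {P Q : Mat} (hP : P.PosSemidef) (hQ : Q.PosSemidef) :
    0 ≤ (P * Q).trace := by
  obtain ⟨R, hRH, hRR⟩ := psd_exists_sqrt hQ
  have h1 : P * Q = P * (R * R) := by rw [hRR]
  have h2 : (P * (R * R)).trace = (R * P * R).trace := by
    rw [← Matrix.mul_assoc, Matrix.trace_mul_cycle]
  rw [h1, h2]
  have h3 : (R * P * R).PosSemidef := by
    have := hP.conjTranspose_mul_mul_same R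
    rwa [hRH] at this
  exact psd_trace_nonneg h3



lemma unit_of_unitary {V : Mat} (hV : V ∈ Matrix.unitaryGroup (Fin n) ℝ) : IsUnit V := by
  refine (Matrix.isUnit_iff_isUnit_det V).mpr ?_
  have h := Matrix.mem_unitaryGroup_iff.mp hV
  exact IsUnit.of_mul_eq_one _ (by rw [← Matrix.det_mul, h, Matrix.det_one])

lemma inv_of_unitary {V : Mat} (hV : V ∈ Matrix.unitaryGroup (Fin n) ℝ) : V⁻¹ = star V :=
  Matrix.inv_eq_right_inv (Matrix.mem_unitaryGroup_iff.mp hV)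

lemma exp_conj_unitary {V : Mat} (hV : V ∈ Matrix.unitaryGroup (Fin n) ℝ) (X : Mat) :
    exp (V * X * star V) = V * exp X * star V := by
  rw [← inv_of_unitary hV, Matrix.exp_conj V X (unit_of_unitary hV)]

lemma exp_smul_hermitian {S : Mat} (hS : S.IsHermitian) (c : ℝ) :
    exp (c • S) = (hS.eigenvectorUnitary : Mat) *
        Matrix.diagonal (fun i => Real.exp (c * hS.eigenvalues i)) *
        star (hS.eigenvectorUnitary : Mat) := by
  have hV := (hS.eigenvectorUnitary).2
  have h1 : c • S = (hS.eigenvectorUnitary : Mat) *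
      Matrix.diagonal (fun i => c * hS.eigenvalues i) *
      star (hS.eigenvectorUnitary : Mat) := by
    conv_lhs => rw [spec_thm hS]
    rw [Matrix.mul_assoc, ← Matrix.mul_smul, ← Matrix.smul_mul, ← Matrix.mul_assoc,
      ← Matrix.diagonal_smul]
    rfl
  rw [h1, exp_conj_unitary hV, Matrix.exp_diagonal, Pi.exp_def]
  congr 2
  ext i
  rw [← Real.exp_eq_exp_ℝ]

lemma trace_exp_smul_hermitian {S : Mat} (hS : S.IsHermitian) (c : ℝ) :
    (exp (c • S)).trace = ∑ i, Real.exp (c * hS.eigenvalues i) := by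
  rw [exp_smul_hermitian hS c, Matrix.trace_mul_cycle]
  have hV := Matrix.mem_unitaryGroup_iff'.mp (hS.eigenvectorUnitary).2
  rw [hV, Matrix.one_mul, Matrix.trace_diagonal]

lemma exp_psd_of_hermitian {S : Mat} (hS : S.IsHermitian) (c : ℝ) :
    (exp (c • S)).PosSemidef := by
  rw [exp_smul_hermitian hS c]
  have hd : (Matrix.diagonal (fun i => Real.exp (c * hS.eigenvalues i))).PosSemidef :=
    Matrix.PosSemidef.diagonal (fun i => (Real.exp_pos _).le)
  have := hd.mul_mul_conjTranspose_same (hS.eigenvectorUnitary : Mat)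
  rwa [← Matrix.star_eq_conjTranspose] at this



lemma conj_pow {V W X : Mat} (hVW : V * W = 1) (hWV : W * V = 1) (k : ℕ) :
    (V * X * W) ^ k = V * X ^ k * W := by
  induction k with
  | zero => simp [hVW]
  | succ k ih =>
    rw [pow_succ, ih, pow_succ]
    calc V * X ^ k * W * (V * X * W) = V * X ^ k * (W * V) * X * W := by
          simp only [Matrix.mul_assoc]
      _ = V * (X ^ k * X) * W := by rw [hWV]; simp only [Matrix.mul_one, Matrix.mul_assoc]

lemma pow_mul_pow_le {x y : ℝ} (hx : 0 ≤ x) (hy : 0 ≤ y) (i j : ℕ) :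
    x ^ j * y ^ i ≤ x ^ (i + j) + y ^ (i + j) := by
  rcases le_total y x with h | h
  · have : x ^ j * y ^ i ≤ x ^ j * x ^ i :=
      mul_le_mul_of_nonneg_left (pow_le_pow_left₀ hy h i) (pow_nonneg hx j)
    calc x ^ j * y ^ i ≤ x ^ j * x ^ i := this
      _ = x ^ (i + j) := by rw [← pow_add, Nat.add_comm]
      _ ≤ x ^ (i + j) + y ^ (i + j) := le_add_of_nonneg_right (pow_nonneg hy _)
  · have : x ^ j * y ^ i ≤ y ^ j * y ^ i :=
      mul_le_mul_of_nonneg_right (pow_le_pow_left₀ hx h j) (pow_nonneg hy i)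
    calc x ^ j * y ^ i ≤ y ^ j * y ^ i := this
      _ = y ^ (i + j) := by rw [← pow_add, Nat.add_comm]
      _ ≤ x ^ (i + j) + y ^ (i + j) := le_add_of_nonneg_left (pow_nonneg hx _)

lemma trace_mul_diag (X : Mat) (v : Fin n → ℝ) :
    (X * Matrix.diagonal v).trace = ∑ a, X a a * v a := by
  simp [Matrix.trace, Matrix.diag, Matrix.mul_diagonal]

lemma trace_conj (Z V W : Mat) (hVW : V * W = 1) : (W * Z * V).trace = Z.trace := by
  rw [Matrix.trace_mul_cycle, hVW, Matrix.one_mul]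

lemma trace_nd (N : Mat) (u v : Fin n → ℝ) :
    (N * Matrix.diagonal u * N * Matrix.diagonal v).trace
      = ∑ a, ∑ b, (N a b * N b a) * (u b * v a) := by
  rw [trace_mul_diag]
  refine Finset.sum_congr rfl fun a _ => ?_
  have h : (N * Matrix.diagonal u * N) a a = ∑ b, N a b * u b * N b a := by
    rw [Matrix.mul_apply]
    simp only [Matrix.mul_diagonal]
  rw [h, Finset.sum_mul]
  exact Finset.sum_congr rfl fun b _ => by ring

lemma trace_nnd (N : Mat) (v : Fin n → ℝ) :
    (N * N * Matrix.diagonal v).trace = ∑ a, ∑ b, (N a b * N b a) * v a := by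
  rw [trace_mul_diag]
  refine Finset.sum_congr rfl fun a _ => ?_
  have h : (N * N) a a = ∑ b, N a b * N b a := by
    rw [Matrix.mul_apply]
  rw [h, Finset.sum_mul]

/-- The key spectral inequality. -/
lemma spec {B M : Mat} (hB : B.PosSemidef) (hM : M.IsHermitian) (i j : ℕ) :
    (M * B ^ i * M * B ^ j).trace ≤ 2 * (M * M * B ^ (i + j)).trace := by
  have hBH : B.IsHermitian := hB.1
  set V : Mat := (hBH.eigenvectorUnitary : Mat) with hVdef
  set W : Mat := star (hBH.eigenvectorUnitary : Mat) with hWdef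
  set μ : Fin n → ℝ := hBH.eigenvalues with hμdef
  have hμ : ∀ a, 0 ≤ μ a := fun a => hB.eigenvalues_nonneg a
  have hVW : V * W = 1 := Matrix.mem_unitaryGroup_iff.mp (hBH.eigenvectorUnitary).2
  have hWV : W * V = 1 := Matrix.mem_unitaryGroup_iff'.mp (hBH.eigenvectorUnitary).2
  have hB_eq : B = V * Matrix.diagonal μ * W := spec_thm hBH
  have hBpow : ∀ k : ℕ, B ^ k = V * Matrix.diagonal (fun a => μ a ^ k) * W := by
    intro k
    rw [hB_eq, conj_pow hVW hWV, Matrix.diagonal_pow]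
    rfl
  set N : Mat := W * M * V with hNdef
  have hNsymm : ∀ a b, N b a = N a b := by
    intro a b
    have hNh : N.IsHermitian := by
      have : Nᴴ = N := by
        rw [hNdef]
        simp only [Matrix.conjTranspose_mul]
        rw [hM]
        rw [hWdef, Matrix.star_eq_conjTranspose, Matrix.conjTranspose_conjTranspose]
        simp only [Matrix.mul_assoc]
        rfl
      exact this
    calc N b a = Nᴴ a b := by rw [Matrix.conjTranspose_apply]; simp
      _ = N a b := by rw [hNh]
  have hcan : ∀ X : Mat, W * (V * X) = X := by
    intro X; rw [← Matrix.mul_assoc, hWV, Matrix.one_mul]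
  have hcan2 : ∀ X : Mat, V * (W * X) = X := by
    intro X; rw [← Matrix.mul_assoc, hVW, Matrix.one_mul]
  have key1 : (M * B ^ i * M * B ^ j).trace
      = (N * Matrix.diagonal (fun a => μ a ^ i) * N * Matrix.diagonal (fun a => μ a ^ j)).trace := by
    have h1 : N * Matrix.diagonal (fun a => μ a ^ i) * N * Matrix.diagonal (fun a => μ a ^ j)
        = W * (M * B ^ i * M * B ^ j) * V := by
      rw [hBpow i, hBpow j, hNdef]
      simp only [Matrix.mul_assoc, hcan, hcan2, hVW, hWV, Matrix.mul_one]
    rw [h1, trace_conj _ _ _ hVW]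
  have key2 : (M * M * B ^ (i + j)).trace
      = (N * N * Matrix.diagonal (fun a => μ a ^ (i + j))).trace := by
    have h2 : N * N * Matrix.diagonal (fun a => μ a ^ (i + j))
        = W * (M * M * B ^ (i + j)) * V := by
      rw [hBpow (i + j), hNdef]
      simp only [Matrix.mul_assoc, hcan, hcan2, hVW, hWV, Matrix.mul_one]
    rw [h2, trace_conj _ _ _ hVW]
  rw [key1, key2, trace_nd, trace_nnd]
  have step : ∀ a b, (N a b * N b a) * (μ b ^ i * μ a ^ j)
      ≤ (N a b * N b a) * (μ a ^ (i + j) + μ b ^ (i + j)) := by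
    intro a b
    have hsq : 0 ≤ N a b * N b a := by rw [hNsymm a b]; exact mul_self_nonneg _
    have h := pow_mul_pow_le (hμ a) (hμ b) i j
    have h' : μ b ^ i * μ a ^ j ≤ μ a ^ (i + j) + μ b ^ (i + j) := by rwa [mul_comm] at h
    exact mul_le_mul_of_nonneg_left h' hsq
  calc ∑ a, ∑ b, (N a b * N b a) * (μ b ^ i * μ a ^ j)
      ≤ ∑ a, ∑ b, (N a b * N b a) * (μ a ^ (i + j) + μ b ^ (i + j)) :=
        Finset.sum_le_sum fun a _ => Finset.sum_le_sum fun b _ => step a b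
    _ = (∑ a, ∑ b, (N a b * N b a) * μ a ^ (i + j))
        + (∑ a, ∑ b, (N a b * N b a) * μ b ^ (i + j)) := by
        rw [← Finset.sum_add_distrib]
        refine Finset.sum_congr rfl fun a _ => ?_
        rw [← Finset.sum_add_distrib]
        refine Finset.sum_congr rfl fun b _ => by ring
    _ = 2 * ∑ a, ∑ b, (N a b * N b a) * μ a ^ (i + j) := by
        have hswap : (∑ a, ∑ b, (N a b * N b a) * μ b ^ (i + j))
            = ∑ a, ∑ b, (N a b * N b a) * μ a ^ (i + j) := by
          rw [Finset.sum_comm]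
          refine Finset.sum_congr rfl fun a _ => Finset.sum_congr rfl fun b _ => by ring
        rw [hswap]; ring





noncomputable def tCLM (C : Mat) :
    @ContinuousLinearMap ℝ ℝ _ _ (RingHom.id ℝ) Mat
      PseudoMetricSpace.toUniformSpace.toTopologicalSpace _ ℝ _ _ _ _ :=
  LinearMap.toContinuousLinearMap
    ((Matrix.traceLinearMap (Fin n) ℝ ℝ).comp (LinearMap.mulLeft ℝ C))

lemma tCLM_apply (C X : Mat) : tCLM C X = (C * X).trace := rfl

/-- derivative of the matrix power along a line -/
lemma hasDerivAt_pow_line (A M : Mat) (k : ℕ) (s : ℝ) :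
    HasDerivAt (fun s : ℝ => (A + s • M) ^ k)
      (∑ i ∈ Finset.range k, (A + s • M) ^ i * M * (A + s • M) ^ (k - 1 - i)) s := by
  induction k with
  | zero =>
    simp only [pow_zero, Finset.range_zero, Finset.sum_empty]
    exact hasDerivAt_const s (1 : Mat)
  | succ k ih =>
    have hB : HasDerivAt (fun s : ℝ => A + s • M) M s := by
      have hB0 := ((hasDerivAt_id s).smul_const M).const_add A
      simp only [one_smul, id_eq] at hB0
      exact hB0
    have h := ih.mul hB
    have h2 : (fun s : ℝ => (A + s • M) ^ (k + 1))
        = fun s : ℝ => (A + s • M) ^ k * (A + s • M) := by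
      funext u; rw [pow_succ]
    rw [h2]
    refine h.congr_deriv (Eq.symm ?_)
    rw [Finset.sum_range_succ]
    simp only [Nat.add_sub_cancel]
    congr 1
    · rw [Finset.sum_mul]
      refine Finset.sum_congr rfl fun i hi => ?_
      have hik : k - 1 - i + 1 = k - i := by
        have := Finset.mem_range.mp hi; omega
      conv_rhs => rw [Matrix.mul_assoc, ← pow_succ, hik]
    · rw [Nat.sub_self, pow_zero, Matrix.mul_one]

lemma summable_aux (c a : ℝ) (ha : 0 ≤ a) :
    Summable (fun k : ℕ => c * ((k : ℝ) * a ^ (k - 1) * ((k.factorial : ℝ))⁻¹)) := by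
  rw [← summable_nat_add_iff 1]
  have heq : (fun k : ℕ => c * (((k + 1 : ℕ) : ℝ) * a ^ (k + 1 - 1) * (((k + 1).factorial : ℝ))⁻¹))
      = fun k : ℕ => c * (a ^ k / (k.factorial : ℝ)) := by
    funext k
    have h1 : (((k + 1).factorial : ℝ)) = ((k + 1 : ℕ) : ℝ) * (k.factorial : ℝ) := by
      rw [Nat.factorial_succ]; push_cast; ring
    have h2 : ((k + 1 : ℕ) : ℝ) ≠ 0 := by positivity
    have h3 : (k.factorial : ℝ) ≠ 0 := by positivity
    rw [h1, Nat.add_sub_cancel]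
    field_simp
  rw [heq]
  exact (Real.summable_pow_div_factorial a).mul_left c

lemma trace_exp_series (C X : Mat) :
    (C * exp X).trace = ∑' k : ℕ, ((k.factorial : ℝ))⁻¹ * (C * X ^ k).trace := by
  have h1 : (C * exp X).trace = tCLM C (exp X) := rfl
  rw [h1, exp_eq_tsum ℝ]
  beta_reduce
  refine ((tCLM C).map_tsum (expSeries_summable' (𝕂 := ℝ) X)).trans ?_
  refine tsum_congr fun k => ?_
  rw [_root_.map_smul, smul_eq_mul, tCLM_apply]

lemma summable_trace_exp_series (C X : Mat) :
    Summable (fun k : ℕ => ((k.factorial : ℝ))⁻¹ * (C * X ^ k).trace) := by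
  have : (fun k : ℕ => ((k.factorial : ℝ))⁻¹ * (C * X ^ k).trace)
      = fun k : ℕ => tCLM C (((k.factorial : ℝ))⁻¹ • X ^ k) := by
    funext k; rw [_root_.map_smul, smul_eq_mul, tCLM_apply]
  rw [this]
  exact (expSeries_summable' (𝕂 := ℝ) X).map (tCLM C).toLinearMap.toAddMonoidHom (tCLM C).continuous


lemma d_norm_le (hn : 0 < n) (X M : Mat) (k : ℕ) :
    ‖∑ i ∈ Finset.range k, X ^ i * M * X ^ (k - 1 - i)‖ ≤ (k : ℝ) * ‖M‖ * ‖X‖ ^ (k - 1) := by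
  haveI : Nonempty (Fin n) := ⟨⟨0, hn⟩⟩
  calc ‖∑ i ∈ Finset.range k, X ^ i * M * X ^ (k - 1 - i)‖
      ≤ ∑ i ∈ Finset.range k, ‖X ^ i * M * X ^ (k - 1 - i)‖ := norm_sum_le _ _
    _ ≤ ∑ i ∈ Finset.range k, ‖M‖ * ‖X‖ ^ (k - 1) := by
        refine Finset.sum_le_sum fun i hi => ?_
        have hik : i + (k - 1 - i) = k - 1 := by
          have := Finset.mem_range.mp hi; omega
        calc ‖X ^ i * M * X ^ (k - 1 - i)‖
            ≤ ‖X ^ i * M‖ * ‖X ^ (k - 1 - i)‖ := norm_mul_le _ _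
          _ ≤ ‖X ^ i‖ * ‖M‖ * ‖X ^ (k - 1 - i)‖ := by
              exact mul_le_mul_of_nonneg_right (norm_mul_le _ _) (norm_nonneg _)
          _ ≤ ‖X‖ ^ i * ‖M‖ * ‖X‖ ^ (k - 1 - i) := by
              have h1 := norm_pow_le X i
              have h2 := norm_pow_le X (k - 1 - i)
              have := mul_le_mul (mul_le_mul_of_nonneg_right h1 (norm_nonneg M)) h2
                (norm_nonneg _) (by positivity)
              exact this
          _ = ‖M‖ * ‖X‖ ^ (k - 1) := by
              conv_rhs => rw [← hik]
              rw [pow_add]; ring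
    _ = (k : ℝ) * ‖M‖ * ‖X‖ ^ (k - 1) := by
        rw [Finset.sum_const, Finset.card_range, nsmul_eq_mul]; ring

lemma summable_aux' (c a : ℝ) :
    Summable (fun k : ℕ => c * ((k : ℝ) * a ^ (k - 1) * ((k.factorial : ℝ))⁻¹)) := by
  rw [← summable_nat_add_iff 1]
  have heq : (fun k : ℕ => c * (((k + 1 : ℕ) : ℝ) * a ^ (k + 1 - 1) * (((k + 1).factorial : ℝ))⁻¹))
      = fun k : ℕ => c * (a ^ k / (k.factorial : ℝ)) := by
    funext k
    have h1 : (((k + 1).factorial : ℝ)) = ((k + 1 : ℕ) : ℝ) * (k.factorial : ℝ) := by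
      rw [Nat.factorial_succ]; push_cast; ring
    have h2 : ((k + 1 : ℕ) : ℝ) ≠ 0 := by positivity
    have h3 : (k.factorial : ℝ) ≠ 0 := by positivity
    rw [h1, Nat.add_sub_cancel]
    field_simp
  rw [heq]
  exact (Real.summable_pow_div_factorial a).mul_left c

lemma summable_dseries (hn : 0 < n) (C X M : Mat) :
    Summable (fun k : ℕ => ((k.factorial : ℝ))⁻¹ *
      (C * ∑ i ∈ Finset.range k, X ^ i * M * X ^ (k - 1 - i)).trace) := by
  refine Summable.of_norm_bounded
    (summable_aux' (‖tCLM C‖ * ‖M‖) ‖X‖) fun k => ?_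
  have h1 : ‖((k.factorial : ℝ))⁻¹ *
      (C * ∑ i ∈ Finset.range k, X ^ i * M * X ^ (k - 1 - i)).trace‖
      = ((k.factorial : ℝ))⁻¹ * ‖tCLM C (∑ i ∈ Finset.range k, X ^ i * M * X ^ (k - 1 - i))‖ := by
    rw [norm_mul, Real.norm_eq_abs, abs_of_nonneg (by positivity), tCLM_apply]
  rw [h1]
  calc ((k.factorial : ℝ))⁻¹ * ‖tCLM C (∑ i ∈ Finset.range k, X ^ i * M * X ^ (k - 1 - i))‖
      ≤ ((k.factorial : ℝ))⁻¹ * (‖tCLM C‖ * ((k : ℝ) * ‖M‖ * ‖X‖ ^ (k - 1))) := by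
        refine mul_le_mul_of_nonneg_left ?_ (by positivity)
        exact le_trans ((tCLM C).le_opNorm _)
          (mul_le_mul_of_nonneg_left (d_norm_le hn X M k) (norm_nonneg _))
    _ = ‖tCLM C‖ * ‖M‖ * ((k : ℝ) * ‖X‖ ^ (k - 1) * ((k.factorial : ℝ))⁻¹) := by ring

lemma summable_kseries (hn : 0 < n) (C X : Mat) :
    Summable (fun k : ℕ => ((k.factorial : ℝ))⁻¹ * ((k : ℝ) * (C * X ^ (k - 1)).trace)) := by
  haveI : Nonempty (Fin n) := ⟨⟨0, hn⟩⟩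
  refine Summable.of_norm_bounded (summable_aux' ‖tCLM C‖ ‖X‖) fun k => ?_
  have h1 : ‖((k.factorial : ℝ))⁻¹ * ((k : ℝ) * (C * X ^ (k - 1)).trace)‖
      = ((k.factorial : ℝ))⁻¹ * ((k : ℝ) * ‖tCLM C (X ^ (k - 1))‖) := by
    rw [norm_mul, norm_mul, Real.norm_eq_abs, Real.norm_eq_abs,
      abs_of_nonneg (a := ((k.factorial : ℝ))⁻¹) (by positivity),
      abs_of_nonneg (a := (k : ℝ)) (by positivity), tCLM_apply]
  rw [h1]
  calc ((k.factorial : ℝ))⁻¹ * ((k : ℝ) * ‖tCLM C (X ^ (k - 1))‖)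
      ≤ ((k.factorial : ℝ))⁻¹ * ((k : ℝ) * (‖tCLM C‖ * ‖X‖ ^ (k - 1))) := by
        refine mul_le_mul_of_nonneg_left (mul_le_mul_of_nonneg_left ?_ (by positivity))
          (by positivity)
        exact le_trans ((tCLM C).le_opNorm _)
          (mul_le_mul_of_nonneg_left (norm_pow_le X (k - 1)) (norm_nonneg _))
    _ = ‖tCLM C‖ * ((k : ℝ) * ‖X‖ ^ (k - 1) * ((k.factorial : ℝ))⁻¹) := by ring

lemma tsum_shift_fact (w : ℕ → ℝ)
    (hsum : Summable (fun k : ℕ => ((k.factorial : ℝ))⁻¹ * ((k : ℝ) * w (k - 1)))) :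
    ∑' k : ℕ, ((k.factorial : ℝ))⁻¹ * ((k : ℝ) * w (k - 1))
      = ∑' k : ℕ, ((k.factorial : ℝ))⁻¹ * w k := by
  rw [Summable.tsum_eq_zero_add hsum]
  simp only [Nat.cast_zero, zero_mul, mul_zero, zero_add]
  refine tsum_congr fun k => ?_
  have h1 : (((k + 1).factorial : ℝ)) = ((k : ℝ) + 1) * (k.factorial : ℝ) := by
    rw [Nat.factorial_succ]; push_cast; ring
  have h3 : (k.factorial : ℝ) ≠ 0 := by positivity
  have h4 : ((k : ℝ) + 1) ≠ 0 := by positivity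
  simp only [Nat.add_sub_cancel, Nat.cast_add, Nat.cast_one, h1]
  field_simp




lemma collapse (hn : 0 < n) (X M : Mat) :
    (∑' k : ℕ, ((k.factorial : ℝ))⁻¹ *
        ((1 : Mat) * ∑ i ∈ Finset.range k, X ^ i * M * X ^ (k - 1 - i)).trace)
      = (M * exp X).trace := by
  have hterm : ∀ k : ℕ, ((k.factorial : ℝ))⁻¹ *
      ((1 : Mat) * ∑ i ∈ Finset.range k, X ^ i * M * X ^ (k - 1 - i)).trace
      = ((k.factorial : ℝ))⁻¹ * ((k : ℝ) * (M * X ^ (k - 1)).trace) := by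
    intro k
    rw [Matrix.one_mul, Matrix.trace_sum]
    congr 1
    have h : ∀ i ∈ Finset.range k, (X ^ i * M * X ^ (k - 1 - i)).trace
        = (M * X ^ (k - 1)).trace := by
      intro i hi
      have hik : k - 1 - i + i = k - 1 := by have := Finset.mem_range.mp hi; omega
      rw [Matrix.trace_mul_cycle, ← pow_add, hik, Matrix.trace_mul_comm]
    rw [Finset.sum_congr rfl h, Finset.sum_const, Finset.card_range, nsmul_eq_mul]
  rw [tsum_congr hterm, tsum_shift_fact (fun j => (M * X ^ j).trace) (summable_kseries hn M X), ← trace_exp_series]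

lemma hasDerivAt_trace_exp (hn : 0 < n) (A M C : Mat) {s : ℝ}
    (hs : s ∈ Set.Ioo (-1 : ℝ) 1) :
    HasDerivAt (fun s : ℝ => (C * exp (A + s • M)).trace)
      (∑' k : ℕ, ((k.factorial : ℝ))⁻¹ *
        (C * ∑ i ∈ Finset.range k,
          (A + s • M) ^ i * M * (A + s • M) ^ (k - 1 - i)).trace) s := by
  haveI : Nonempty (Fin n) := ⟨⟨0, hn⟩⟩
  set a : ℝ := ‖A‖ + ‖M‖ with hadef
  have hBnorm : ∀ y : ℝ, y ∈ Set.Ioo (-1 : ℝ) 1 → ‖A + y • M‖ ≤ a := by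
    intro y hy
    calc ‖A + y • M‖ ≤ ‖A‖ + ‖y • M‖ := norm_add_le _ _
      _ = ‖A‖ + |y| * ‖M‖ := by rw [norm_smul, Real.norm_eq_abs]
      _ ≤ ‖A‖ + 1 * ‖M‖ := by
          have h : |y| ≤ 1 := abs_le.mpr ⟨hy.1.le, hy.2.le⟩
          exact add_le_add_right (mul_le_mul_of_nonneg_right h (norm_nonneg _)) _
      _ = a := by rw [one_mul]
  have hgd : ∀ (k : ℕ) (y : ℝ), y ∈ Set.Ioo (-1 : ℝ) 1 →
      HasDerivAt (fun y : ℝ => ((k.factorial : ℝ))⁻¹ * tCLM C ((A + y • M) ^ k))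
        (((k.factorial : ℝ))⁻¹ * tCLM C (∑ i ∈ Finset.range k,
          (A + y • M) ^ i * M * (A + y • M) ^ (k - 1 - i))) y := by
    intro k y _
    exact ((tCLM C).hasFDerivAt.comp_hasDerivAt y
      (hasDerivAt_pow_line A M k y)).const_mul ((k.factorial : ℝ))⁻¹
  have hgb : ∀ (k : ℕ) (y : ℝ), y ∈ Set.Ioo (-1 : ℝ) 1 →
      ‖((k.factorial : ℝ))⁻¹ * tCLM C (∑ i ∈ Finset.range k,
          (A + y • M) ^ i * M * (A + y • M) ^ (k - 1 - i))‖
        ≤ (‖tCLM C‖ * ‖M‖) * ((k : ℝ) * a ^ (k - 1) * ((k.factorial : ℝ))⁻¹) := by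
    intro k y hy
    have h1 : ‖((k.factorial : ℝ))⁻¹ * tCLM C (∑ i ∈ Finset.range k,
        (A + y • M) ^ i * M * (A + y • M) ^ (k - 1 - i))‖
        = ((k.factorial : ℝ))⁻¹ * ‖tCLM C (∑ i ∈ Finset.range k,
          (A + y • M) ^ i * M * (A + y • M) ^ (k - 1 - i))‖ := by
      rw [norm_mul, Real.norm_eq_abs, abs_of_nonneg (by positivity)]
    rw [h1]
    calc ((k.factorial : ℝ))⁻¹ * ‖tCLM C (∑ i ∈ Finset.range k,
          (A + y • M) ^ i * M * (A + y • M) ^ (k - 1 - i))‖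
        ≤ ((k.factorial : ℝ))⁻¹ * (‖tCLM C‖ * ((k : ℝ) * ‖M‖ * ‖A + y • M‖ ^ (k - 1))) := by
          refine mul_le_mul_of_nonneg_left ?_ (by positivity)
          exact le_trans ((tCLM C).le_opNorm _)
            (mul_le_mul_of_nonneg_left (d_norm_le hn _ M k) (norm_nonneg _))
      _ ≤ ((k.factorial : ℝ))⁻¹ * (‖tCLM C‖ * ((k : ℝ) * ‖M‖ * a ^ (k - 1))) := by
          refine mul_le_mul_of_nonneg_left (mul_le_mul_of_nonneg_left ?_ (norm_nonneg _))
            (by positivity)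
          refine mul_le_mul_of_nonneg_left ?_ (by positivity)
          exact pow_le_pow_left₀ (norm_nonneg _) (hBnorm y hy) _
      _ = (‖tCLM C‖ * ‖M‖) * ((k : ℝ) * a ^ (k - 1) * ((k.factorial : ℝ))⁻¹) := by ring
  have h0 : (0 : ℝ) ∈ Set.Ioo (-1 : ℝ) 1 := by norm_num
  have hsum0 : Summable fun k : ℕ => ((k.factorial : ℝ))⁻¹ * tCLM C ((A + (0:ℝ) • M) ^ k) := by
    refine (summable_trace_exp_series C (A + (0:ℝ) • M)).congr fun k => ?_
    rw [tCLM_apply]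
  have key := hasDerivAt_tsum_of_isPreconnected (summable_aux' (‖tCLM C‖ * ‖M‖) a)
    isOpen_Ioo (convex_Ioo (-1 : ℝ) 1).isPreconnected hgd hgb h0 hsum0 hs
  have hfun : (fun z : ℝ => ∑' k : ℕ, ((k.factorial : ℝ))⁻¹ * tCLM C ((A + z • M) ^ k))
      = fun z : ℝ => (C * exp (A + z • M)).trace := by
    funext z
    rw [trace_exp_series]
    exact tsum_congr fun k => by rw [tCLM_apply]
  rw [hfun] at key
  have hval : (∑' k : ℕ, ((k.factorial : ℝ))⁻¹ * tCLM C (∑ i ∈ Finset.range k,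
        (A + s • M) ^ i * M * (A + s • M) ^ (k - 1 - i)))
      = ∑' k : ℕ, ((k.factorial : ℝ))⁻¹ * (C * ∑ i ∈ Finset.range k,
        (A + s • M) ^ i * M * (A + s • M) ^ (k - 1 - i)).trace :=
    tsum_congr fun k => by rw [tCLM_apply]
  rw [hval] at key
  exact key

lemma exp_psd {H : Mat} (hH : H.IsHermitian) : (exp H).PosSemidef := by
  have h := exp_psd_of_hermitian hH 1
  rwa [one_smul] at h

lemma psd_sub_sq {M : Mat} (hM : M.PosSemidef) (hM1 : ((1 : Mat) - M).PosSemidef) :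
    (M - M * M).PosSemidef := by
  obtain ⟨R, hRH, hRR⟩ := psd_exists_sqrt hM
  have h1 : R * ((1 : Mat) - M) * R = M - M * M := by
    rw [Matrix.mul_sub, Matrix.mul_one, Matrix.sub_mul]
    rw [hRR]
    congr 1
    calc R * M * R = R * (R * R) * R := by
          rw [hRR]
      _ = (R * R) * (R * R) := by
          simp only [Matrix.mul_assoc]
      _ = M * M := by rw [hRR]
  have h2 := hM1.conjTranspose_mul_mul_same R
  rwa [hRH, h1] at h2

lemma trace_MM_le {M : Mat} (hM : M.PosSemidef) (hM1 : ((1 : Mat) - M).PosSemidef)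
    {E : Mat} (hE : E.PosSemidef) : (M * M * E).trace ≤ (M * E).trace := by
  have h := trace_mul_psd_nonneg (psd_sub_sq hM hM1) hE
  rw [Matrix.sub_mul, Matrix.trace_sub] at h
  linarith

lemma LL_le (hn : 0 < n) {A M : Mat} (hA : A.PosSemidef) (hM : M.PosSemidef)
    (hM1 : ((1 : Mat) - M).PosSemidef) {s : ℝ} (hs0 : 0 ≤ s) :
    (∑' k : ℕ, ((k.factorial : ℝ))⁻¹ *
        (M * ∑ i ∈ Finset.range k,
          (A + s • M) ^ i * M * (A + s • M) ^ (k - 1 - i)).trace)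
      ≤ 2 * (M * exp (A + s • M)).trace := by
  set X : Mat := A + s • M with hXdef
  have hX : X.PosSemidef := hA.add (psd_smul hM hs0)
  have hXH : X.IsHermitian := hX.1
  have hterm : ∀ k : ℕ, ((k.factorial : ℝ))⁻¹ *
      (M * ∑ i ∈ Finset.range k, X ^ i * M * X ^ (k - 1 - i)).trace
      ≤ ((k.factorial : ℝ))⁻¹ * ((k : ℝ) * (2 * (M * M * X ^ (k - 1)).trace)) := by
    intro k
    refine mul_le_mul_of_nonneg_left ?_ (by positivity)
    rw [Finset.mul_sum, Matrix.trace_sum]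
    have h : ∀ i ∈ Finset.range k, (M * (X ^ i * M * X ^ (k - 1 - i))).trace
        ≤ 2 * (M * M * X ^ (k - 1)).trace := by
      intro i hi
      have hik : i + (k - 1 - i) = k - 1 := by have := Finset.mem_range.mp hi; omega
      have hsp := spec hX hM.1 i (k - 1 - i)
      rw [hik] at hsp
      calc (M * (X ^ i * M * X ^ (k - 1 - i))).trace
          = (M * X ^ i * M * X ^ (k - 1 - i)).trace := by
            simp only [Matrix.mul_assoc]
        _ ≤ 2 * (M * M * X ^ (k - 1)).trace := hsp
    calc (∑ i ∈ Finset.range k, (M * (X ^ i * M * X ^ (k - 1 - i))).trace)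
        ≤ ∑ _i ∈ Finset.range k, 2 * (M * M * X ^ (k - 1)).trace :=
          Finset.sum_le_sum h
      _ = (k : ℝ) * (2 * (M * M * X ^ (k - 1)).trace) := by
          rw [Finset.sum_const, Finset.card_range, nsmul_eq_mul]
  have hsumL : Summable (fun k : ℕ => ((k.factorial : ℝ))⁻¹ *
      (M * ∑ i ∈ Finset.range k, X ^ i * M * X ^ (k - 1 - i)).trace) :=
    summable_dseries hn M X M
  have hsumR : Summable (fun k : ℕ => ((k.factorial : ℝ))⁻¹ *
      ((k : ℝ) * (2 * (M * M * X ^ (k - 1)).trace))) := by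
    refine (summable_kseries hn ((2:ℝ) • (M * M)) X).congr fun k => ?_
    congr 1
    congr 1
    rw [Matrix.smul_mul, Matrix.trace_smul, smul_eq_mul]
  calc (∑' k : ℕ, ((k.factorial : ℝ))⁻¹ *
        (M * ∑ i ∈ Finset.range k, X ^ i * M * X ^ (k - 1 - i)).trace)
      ≤ ∑' k : ℕ, ((k.factorial : ℝ))⁻¹ * ((k : ℝ) * (2 * (M * M * X ^ (k - 1)).trace)) :=
        Summable.tsum_le_tsum hterm hsumL hsumR
    _ = 2 * (M * M * exp X).trace := by
        have hw := tsum_shift_fact (fun k => 2 * (M * M * X ^ k).trace) hsumR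
        rw [hw]
        have h2 : (fun k : ℕ => ((k.factorial : ℝ))⁻¹ * (2 * (M * M * X ^ k).trace))
            = fun k : ℕ => 2 * (((k.factorial : ℝ))⁻¹ * (M * M * X ^ k).trace) := by
          funext k; ring
        rw [h2, tsum_mul_left, ← trace_exp_series]
    _ ≤ 2 * (M * exp X).trace := by
        have := trace_MM_le hM hM1 (exp_psd hXH)
        linarith


lemma mono_glue {f f' : ℝ → ℝ} {ε : ℝ} (hε0 : 0 < ε) (hε1 : ε < 1)
    (hf : ∀ s ∈ Set.Ioo (-1 : ℝ) 1, HasDerivAt f (f' s) s)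
    (hf'le : ∀ s ∈ Set.Ioo (0 : ℝ) ε, f' s ≤ 0) :
    ∀ s ∈ Set.Icc (0 : ℝ) ε, f s ≤ f 0 := by
  have hsub : Set.Icc (0 : ℝ) ε ⊆ Set.Ioo (-1 : ℝ) 1 := by
    intro x hx
    exact ⟨by linarith [hx.1], by linarith [hx.2]⟩
  have hcont : ContinuousOn f (Set.Icc 0 ε) := fun x hx =>
    ((hf x (hsub hx)).continuousAt).continuousWithinAt
  have hdiff : DifferentiableOn ℝ f (interior (Set.Icc (0 : ℝ) ε)) := by
    rw [interior_Icc]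
    intro x hx
    exact ((hf x (hsub (Set.Ioo_subset_Icc_self hx))).differentiableAt).differentiableWithinAt
  have hderiv : ∀ x ∈ interior (Set.Icc (0 : ℝ) ε), deriv f x ≤ 0 := by
    rw [interior_Icc]
    intro x hx
    rw [(hf x (hsub (Set.Ioo_subset_Icc_self hx))).deriv]
    exact hf'le x hx
  have hanti := antitoneOn_of_deriv_nonpos (convex_Icc 0 ε) hcont hdiff hderiv
  intro s hs
  exact hanti (Set.left_mem_Icc.mpr hε0.le) hs hs.1

lemma step_ineq (hn : 0 < n) {A M : Mat} (hA : A.PosSemidef) (hM : M.PosSemidef)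
    (hM1 : ((1 : Mat) - M).PosSemidef) {ε : ℝ} (hε0 : 0 < ε) (hε : ε ≤ 1 / 2) :
    (exp (A + ε • M)).trace
      ≤ (exp A).trace + (ε * (1 + 2 * ε)) * (M * exp A).trace := by
  have hε1 : ε < 1 := by linarith
  set G : ℝ → ℝ := fun s => (M * exp (A + s • M)).trace with hGdef
  set L : ℝ → ℝ := fun s => ∑' k : ℕ, ((k.factorial : ℝ))⁻¹ *
      (M * ∑ i ∈ Finset.range k,
        (A + s • M) ^ i * M * (A + s • M) ^ (k - 1 - i)).trace with hLdef
  set F : ℝ → ℝ := fun s => (exp (A + s • M)).trace with hFdef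
  have hF : ∀ s ∈ Set.Ioo (-1 : ℝ) 1, HasDerivAt F (G s) s := by
    intro s hs
    have h := hasDerivAt_trace_exp hn A M 1 hs
    rw [collapse hn (A + s • M) M] at h
    have hfun : (fun s : ℝ => ((1 : Mat) * exp (A + s • M)).trace) = F := by
      funext z
      rw [hFdef]
      simp only [Matrix.one_mul]
    rwa [hfun] at h
  have hG : ∀ s ∈ Set.Ioo (-1 : ℝ) 1, HasDerivAt G (L s) s := fun s hs =>
    hasDerivAt_trace_exp hn A M M hs
  have hGpos : ∀ s : ℝ, 0 ≤ s → 0 ≤ G s := fun s hs =>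
    trace_mul_psd_nonneg hM (exp_psd (hA.add (psd_smul hM hs)).1)
  have hLle : ∀ s : ℝ, 0 ≤ s → L s ≤ 2 * G s := fun s hs => LL_le hn hA hM hM1 hs
  -- first comparison: G s ≤ exp (2 s) * G 0 on [0, ε]
  have key1 : ∀ s ∈ Set.Icc (0 : ℝ) ε, G s ≤ Real.exp (2 * s) * G 0 := by
    have hder : ∀ s ∈ Set.Ioo (-1 : ℝ) 1,
        HasDerivAt (fun s => Real.exp (-2 * s) * G s)
          (Real.exp (-2 * s) * (-2 * 1) * G s + Real.exp (-2 * s) * L s) s := by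
      intro s hs
      exact (((hasDerivAt_id s).const_mul (-2 : ℝ)).exp).mul (hG s hs)
    have hneg : ∀ s ∈ Set.Ioo (0 : ℝ) ε,
        Real.exp (-2 * s) * (-2 * 1) * G s + Real.exp (-2 * s) * L s ≤ 0 := by
      intro s hs
      have h1 := hLle s hs.1.le
      have h2 := (Real.exp_pos (-2 * s)).le
      nlinarith [hGpos s hs.1.le]
    have hmono := mono_glue hε0 hε1 hder hneg
    intro s hs
    have h := hmono s hs
    have h0 : Real.exp (-2 * 0) * G 0 = G 0 := by norm_num
    rw [h0] at h
    calc G s = Real.exp (2 * s) * Real.exp (-2 * s) * G s := by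
          rw [← Real.exp_add]; norm_num
      _ = Real.exp (2 * s) * (Real.exp (-2 * s) * G s) := by ring
      _ ≤ Real.exp (2 * s) * G 0 := mul_le_mul_of_nonneg_left h (Real.exp_pos _).le
  -- second comparison
  have hexp : ∀ s : ℝ, HasDerivAt (fun s : ℝ => (Real.exp (2 * s) - 1) / 2 * G 0)
      (Real.exp (2 * s) * G 0) s := by
    intro s
    have h := ((((hasDerivAt_id s).const_mul (2 : ℝ)).exp).sub_const 1).div_const (2 : ℝ)
    have h2 := h.mul_const (G 0)
    simp only [id_eq] at h2
    refine h2.congr_deriv ?_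
    ring
  have key2 : F ε ≤ F 0 + (Real.exp (2 * ε) - 1) / 2 * G 0 := by
    have hder : ∀ s ∈ Set.Ioo (-1 : ℝ) 1,
        HasDerivAt (fun s => F s - (Real.exp (2 * s) - 1) / 2 * G 0)
          (G s - Real.exp (2 * s) * G 0) s := fun s hs => (hF s hs).sub (hexp s)
    have hneg : ∀ s ∈ Set.Ioo (0 : ℝ) ε, G s - Real.exp (2 * s) * G 0 ≤ 0 := by
      intro s hs
      have := key1 s (Set.Ioo_subset_Icc_self hs)
      linarith
    have hmono := mono_glue hε0 hε1 hder hneg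
    have h := hmono ε (Set.right_mem_Icc.mpr hε0.le)
    have h0 : (Real.exp (2 * 0) - 1) / 2 * G 0 = 0 := by norm_num
    rw [h0] at h
    linarith
  -- numeric bound
  have hnum : (Real.exp (2 * ε) - 1) / 2 ≤ ε * (1 + 2 * ε) := by
    have hb := Real.exp_bound' (by linarith : (0 : ℝ) ≤ 2 * ε)
      (by linarith : 2 * ε ≤ 1) (by norm_num : 0 < 2)
    have hsum : (∑ m ∈ Finset.range 2, (2 * ε) ^ m / (m.factorial : ℝ)) = 1 + 2 * ε := by
      simp [Finset.sum_range_succ]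
    rw [hsum] at hb
    norm_num at hb
    nlinarith
  have hG0 : 0 ≤ G 0 := hGpos 0 le_rfl
  have hfinal : F ε ≤ F 0 + (ε * (1 + 2 * ε)) * G 0 := by
    have := mul_le_mul_of_nonneg_right hnum hG0
    linarith
  have hF0 : F 0 = (exp A).trace := by
    rw [hFdef]
    norm_num
  have hG0eq : G 0 = (M * exp A).trace := by
    rw [hGdef]
    norm_num
  rw [hF0, hG0eq] at hfinal
  exact hfinal


lemma induction_bound (hn : 0 < n) {ε : ℝ} (hε0 : 0 < ε) (hε : ε ≤ 1 / 2)
    (M : ℕ → Mat) (hM : ∀ t, (M t).PosSemidef)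
    (hMI : ∀ t, ((1 : Mat) - M t).PosSemidef) (T : ℕ) :
    (exp (ε • ∑ τ ∈ Finset.range T, M τ)).trace ≤ (n : ℝ) *
      Real.exp ((ε * (1 + 2 * ε)) * ∑ t ∈ Finset.range T,
        (M t * ((exp (ε • ∑ τ ∈ Finset.range t, M τ)).trace⁻¹ •
          exp (ε • ∑ τ ∈ Finset.range t, M τ))).trace) := by
  haveI : Nonempty (Fin n) := ⟨⟨0, hn⟩⟩
  set S : ℕ → Mat := fun t => ∑ τ ∈ Finset.range t, M τ with hSdef
  set W : ℕ → Mat := fun t => exp (ε • S t) with hWdef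
  set q : ℕ → ℝ := fun t => (M t * ((W t).trace⁻¹ • W t)).trace with hqdef
  have hS : ∀ t, (S t).PosSemidef := fun t => psd_sum hM
  have hεS : ∀ t, (ε • S t).PosSemidef := fun t => psd_smul (hS t) hε0.le
  have hΦpos : ∀ t, 0 < (W t).trace := by
    intro t
    rw [hWdef]
    rw [trace_exp_smul_hermitian (hS t).1 ε]
    exact Finset.sum_pos (fun i _ => Real.exp_pos _) Finset.univ_nonempty
  have hMW : ∀ t, (M t * W t).trace = (W t).trace * q t := by
    intro t
    rw [hqdef]
    simp only [Matrix.mul_smul, Matrix.trace_smul, smul_eq_mul]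
    rw [← mul_assoc, mul_inv_cancel₀ (hΦpos t).ne', one_mul]
  have hstep : ∀ t, (W (t + 1)).trace ≤ (W t).trace * Real.exp ((ε * (1 + 2 * ε)) * q t) := by
    intro t
    have h1 : ε • S (t + 1) = ε • S t + ε • M t := by
      rw [hSdef]
      simp only
      rw [Finset.sum_range_succ, smul_add]
    have h2 := step_ineq hn (hεS t) (hM t) (hMI t) hε0 hε
    have h3 : (W (t + 1)).trace ≤ (W t).trace + (ε * (1 + 2 * ε)) * ((M t) * W t).trace := by
      rw [hWdef]
      simp only
      rw [h1]
      exact h2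
    rw [hMW t] at h3
    have h4 : (W t).trace + ε * (1 + 2 * ε) * ((W t).trace * q t)
        = (W t).trace * (1 + ε * (1 + 2 * ε) * q t) := by ring
    rw [h4] at h3
    calc (W (t + 1)).trace ≤ (W t).trace * (1 + ε * (1 + 2 * ε) * q t) := h3
      _ ≤ (W t).trace * Real.exp (ε * (1 + 2 * ε) * q t) := by
          refine mul_le_mul_of_nonneg_left ?_ (hΦpos t).le
          have := Real.add_one_le_exp (ε * (1 + 2 * ε) * q t)
          linarith
  have hind : ∀ T', (W T').trace ≤ (n : ℝ) *
      Real.exp ((ε * (1 + 2 * ε)) * ∑ t ∈ Finset.range T', q t) := by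
    intro T'
    induction T' with
    | zero =>
      have h0 : (W 0).trace = (n : ℝ) := by
        rw [hWdef]
        simp only [hSdef, Finset.range_zero, Finset.sum_empty, smul_zero, exp_zero,
          Matrix.trace_one]
        simp
      rw [h0]
      simp
    | succ T' ih =>
      calc (W (T' + 1)).trace ≤ (W T').trace * Real.exp ((ε * (1 + 2 * ε)) * q T') := hstep T'
        _ ≤ ((n : ℝ) * Real.exp ((ε * (1 + 2 * ε)) * ∑ t ∈ Finset.range T', q t)) *
            Real.exp ((ε * (1 + 2 * ε)) * q T') :=
          mul_le_mul_of_nonneg_right ih (Real.exp_pos _).le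
        _ = (n : ℝ) * Real.exp ((ε * (1 + 2 * ε)) * ∑ t ∈ Finset.range (T' + 1), q t) := by
          rw [mul_assoc, ← Real.exp_add, Finset.sum_range_succ, mul_add]
          ring_nf
  exact hind T

end MMWU

open MMWU

/-- Matrix multiplicative weights regret bound: with `0 < ε ≤ 1/2` and symmetric
matrices `0 ≼ M t ≼ I`, setting `W t = exp (ε • ∑_{τ < t} M τ)` and
`P t = W t / trace (W t)`, we have
`(1 + 2ε) * ∑_{t < T} M t ⬝ P t ≥ λ_max (∑_{t < T} M t) - (ln n) / ε`. -/
theorem mmwu_regret_bound {n : ℕ} (hn : 0 < n) (T : ℕ) (ε : ℝ)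
    (hε0 : 0 < ε) (hε : ε ≤ 1 / 2)
    (M : ℕ → Matrix (Fin n) (Fin n) ℝ)
    (hM : ∀ t, (M t).PosSemidef)
    (hMI : ∀ t, ((1 : Matrix (Fin n) (Fin n) ℝ) - M t).PosSemidef) :
    (⨆ i, (show (∑ t ∈ Finset.range T, M t).IsHermitian from by
        rw [Matrix.IsHermitian, Matrix.conjTranspose_sum]
        exact Finset.sum_congr rfl fun t _ => (hM t).1).eigenvalues i) - Real.log n / ε ≤
      (1 + 2 * ε) *
        ∑ t ∈ Finset.range T,
          (M t *
            ((exp (ε • ∑ τ ∈ Finset.range t, M τ)).trace⁻¹ •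
              exp (ε • ∑ τ ∈ Finset.range t, M τ))).trace := by
  haveI : Nonempty (Fin n) := ⟨⟨0, hn⟩⟩
  rw [sub_le_iff_le_add]
  set Q : ℝ := ∑ t ∈ Finset.range T,
      (M t * ((exp (ε • ∑ τ ∈ Finset.range t, M τ)).trace⁻¹ •
        exp (ε • ∑ τ ∈ Finset.range t, M τ))).trace with hQdef
  refine ciSup_le fun i => ?_
  have hS : (∑ t ∈ Finset.range T, M t).PosSemidef := psd_sum hM
  have hnpos : (0 : ℝ) < (n : ℝ) := by exact_mod_cast hn
  have h1 : Real.exp (ε * hS.1.eigenvalues i)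
      ≤ (exp (ε • ∑ t ∈ Finset.range T, M t)).trace := by
    rw [trace_exp_smul_hermitian hS.1 ε]
    exact Finset.single_le_sum (f := fun j => Real.exp (ε * hS.1.eigenvalues j))
      (fun j _ => (Real.exp_pos _).le) (Finset.mem_univ i)
  have h2 := induction_bound hn hε0 hε M hM hMI T
  have h3 : Real.exp (ε * hS.1.eigenvalues i)
      ≤ (n : ℝ) * Real.exp ((ε * (1 + 2 * ε)) * Q) := h1.trans h2
  have h4 : ε * hS.1.eigenvalues i ≤ Real.log ((n : ℝ) * Real.exp ((ε * (1 + 2 * ε)) * Q)) :=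
    (Real.le_log_iff_exp_le (by positivity)).mpr h3
  rw [Real.log_mul hnpos.ne' (Real.exp_ne_zero _), Real.log_exp] at h4
  have h5 : hS.1.eigenvalues i ≤ (Real.log n + ε * (1 + 2 * ε) * Q) / ε := by
    rw [le_div_iff₀ hε0, mul_comm]
    linarith
  have h7 : (Real.log n + ε * (1 + 2 * ε) * Q) / ε = (1 + 2 * ε) * Q + Real.log n / ε := by
    field_simp
    ring
  rw [h7] at h5
  exact h5
end

section
/- For symmetric PSD matrices A and B, the Golden–Thompson inequality holds: trace(exp(A + B)) ≤ trace(exp(A)·exp(B)). -/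
open Matrix NormedSpace

namespace GTaux

variable {n : ℕ}

local notation "Mat" => Matrix (Fin n) (Fin n) ℝ

lemma trace_transpose_mul_eq (X Y : Mat) :
    (Xᵀ * Y).trace = ∑ p : Fin n × Fin n, X p.1 p.2 * Y p.1 p.2 := by
  rw [Fintype.sum_prod_type]
  simp [Matrix.trace, Matrix.mul_apply, Matrix.diag, Matrix.transpose_apply]
  exact Finset.sum_comm

lemma trace_transpose_mul_self_nonneg (X : Mat) : 0 ≤ (Xᵀ * X).trace := by
  rw [trace_transpose_mul_eq]
  exact Finset.sum_nonneg fun p _ => mul_self_nonneg _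

lemma cs_sq (X Y : Mat) :
    ((Xᵀ * Y).trace) ^ 2 ≤ (Xᵀ * X).trace * (Yᵀ * Y).trace := by
  rw [trace_transpose_mul_eq, trace_transpose_mul_eq, trace_transpose_mul_eq]
  simpa [sq] using Finset.sum_mul_sq_le_sq_mul_sq Finset.univ
    (fun p : Fin n × Fin n => X p.1 p.2) (fun p => Y p.1 p.2)

/-- `tr (X*X) ≤ tr (Xᵀ*X)`. -/
lemma trace_mul_self_le (X : Mat) : (X * X).trace ≤ (Xᵀ * X).trace := by
  have h := cs_sq Xᵀ X
  rw [Matrix.transpose_transpose] at h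
  have h2 : (X * Xᵀ).trace = (Xᵀ * X).trace := Matrix.trace_mul_comm _ _
  have h3 : 0 ≤ (Xᵀ * X).trace := trace_transpose_mul_self_nonneg X
  nlinarith [h, h2, h3]

/-- cyclicity of trace for powers: `tr ((U*V)^m) = tr ((V*U)^m)`. -/
lemma trace_pow_mul_comm (U V : Mat) (m : ℕ) :
    ((U * V) ^ m).trace = ((V * U) ^ m).trace := by
  induction m with
  | zero => simp
  | succ m ih =>
    have hsc : U * (V * U) ^ m = (U * V) ^ m * U :=
      SemiconjBy.pow_right ((mul_assoc U V U).symm) m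
    calc ((U * V) ^ (m+1)).trace = ((U * V) ^ m * (U * V)).trace := by rw [pow_succ]
      _ = (((U * V) ^ m * U) * V).trace := by rw [mul_assoc]
      _ = (V * ((U * V) ^ m * U)).trace := (Matrix.trace_mul_comm _ _)
      _ = (V * (U * (V * U) ^ m)).trace := by rw [← hsc]
      _ = ((V * U) * (V * U) ^ m).trace := by rw [← mul_assoc]
      _ = ((V * U) ^ (m+1)).trace := by rw [← pow_succ']

/-- For symmetric `U`, `V` with `tr (V*V) = tr (U*U)`, `tr (U*V) ≤ tr (U*U)`. -/
lemma trace_mul_le_of_symm {U V : Mat} (hU : Uᵀ = U) (hV : Vᵀ = V)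
    (heq : (V * V).trace = (U * U).trace) : (U * V).trace ≤ (U * U).trace := by
  have h := cs_sq U V
  rw [hU, hV, heq] at h
  have h3 : 0 ≤ (U * U).trace := by
    have := trace_transpose_mul_self_nonneg U; rwa [hU] at this
  nlinarith [h, h3]

lemma transpose_eq_of_posSemidef {S : Mat} (hS : S.PosSemidef) : Sᵀ = S := by
  have := hS.isHermitian
  rwa [Matrix.IsHermitian, Matrix.conjTranspose_eq_transpose_of_trivial] at this

/-- main mutual induction -/
lemma key (k : ℕ) :
    (∀ S T : Mat, S.PosSemidef → T.PosSemidef →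
      (((S * T) ^ 2 ^ (k+1)).trace ≤ (((S * T)ᵀ * (S * T)) ^ 2 ^ k).trace)) ∧
    (∀ S T : Mat, S.PosSemidef → T.PosSemidef →
      (((S * T) ^ 2 ^ k).trace ≤ (S ^ 2 ^ k * T ^ 2 ^ k).trace)) := by
  induction k with
  | zero =>
    constructor
    · intro S T _ _
      simpa [pow_one, sq] using trace_mul_self_le (S * T)
    · intro S T _ _
      simp
  | succ k ih =>
    obtain ⟨Vk, Wk⟩ := ih
    have hW : ∀ S T : Mat, S.PosSemidef → T.PosSemidef →
        ((S * T) ^ 2 ^ (k+1)).trace ≤ (S ^ 2 ^ (k+1) * T ^ 2 ^ (k+1)).trace := by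
      intro S T hS hT
      have hSt := transpose_eq_of_posSemidef hS
      have hTt := transpose_eq_of_posSemidef hT
      have h1 := Vk S T hS hT
      have e1 : (S * T)ᵀ * (S * T) = T * (S * S * T) := by
        rw [Matrix.transpose_mul, hSt, hTt]; noncomm_ring
      have h2 : (((S * T)ᵀ * (S * T)) ^ 2 ^ k).trace
          = (((S * S) * (T * T)) ^ 2 ^ k).trace := by
        rw [e1, trace_pow_mul_comm]
        congr 2
        noncomm_ring
      have h3 := Wk (S * S) (T * T) (by simpa [sq] using hS.pow 2) (by simpa [sq] using hT.pow 2)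
      have e2 : (S * S) ^ 2 ^ k = S ^ 2 ^ (k+1) := by
        rw [← sq, ← pow_mul, pow_succ']
      have e3 : (T * T) ^ 2 ^ k = T ^ 2 ^ (k+1) := by
        rw [← sq, ← pow_mul, pow_succ']
      calc ((S * T) ^ 2 ^ (k+1)).trace ≤ (((S * T)ᵀ * (S * T)) ^ 2 ^ k).trace := h1
        _ = (((S * S) * (T * T)) ^ 2 ^ k).trace := h2
        _ ≤ ((S * S) ^ 2 ^ k * (T * T) ^ 2 ^ k).trace := h3
        _ = (S ^ 2 ^ (k+1) * T ^ 2 ^ (k+1)).trace := by rw [e2, e3]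
    refine ⟨?_, hW⟩
    intro S T hS hT
    have hSt := transpose_eq_of_posSemidef hS
    have hTt := transpose_eq_of_posSemidef hT
    obtain ⟨X, hX⟩ : ∃ X : Mat, X = S * T := ⟨_, rfl⟩
    rw [← hX]
    have e0 : (X ^ 2 ^ (k+2)).trace = ((X * X) ^ 2 ^ (k+1)).trace := by
      rw [← sq, ← pow_mul, pow_succ']
    have hSTS : (S * T * S).PosSemidef := by
      have := hT.mul_mul_conjTranspose_same S
      rwa [Matrix.conjTranspose_eq_transpose_of_trivial, hSt] at this
    have e1 : X * X = (S * T * S) * T := by rw [hX]; noncomm_ring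
    have h1 : ((X * X) ^ 2 ^ (k+1)).trace ≤ (((X * X)ᵀ * (X * X)) ^ 2 ^ k).trace := by
      rw [e1]; exact Vk (S * T * S) T hSTS hT
    have hcyc : (((X * X)ᵀ * (X * X)) ^ 2 ^ k).trace
        = (((Xᵀ * X) * (X * Xᵀ)) ^ 2 ^ k).trace := by
      have h := trace_pow_mul_comm Xᵀ (Xᵀ * (X * X)) (2 ^ k)
      calc (((X * X)ᵀ * (X * X)) ^ 2 ^ k).trace
          = ((Xᵀ * (Xᵀ * (X * X))) ^ 2 ^ k).trace := by
            congr 2; rw [Matrix.transpose_mul]; noncomm_ring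
        _ = (((Xᵀ * (X * X)) * Xᵀ) ^ 2 ^ k).trace := h
        _ = (((Xᵀ * X) * (X * Xᵀ)) ^ 2 ^ k).trace := by congr 2; noncomm_ring
    have hP : (Xᵀ * X).PosSemidef := by
      have := Matrix.posSemidef_conjTranspose_mul_self X
      rwa [Matrix.conjTranspose_eq_transpose_of_trivial] at this
    have hQ : (X * Xᵀ).PosSemidef := by
      have := Matrix.posSemidef_self_mul_conjTranspose X
      rwa [Matrix.conjTranspose_eq_transpose_of_trivial] at this
    have h2 := Wk (Xᵀ * X) (X * Xᵀ) hP hQ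
    have hPt : ((Xᵀ * X) ^ 2 ^ k)ᵀ = (Xᵀ * X) ^ 2 ^ k := by
      rw [Matrix.transpose_pow, Matrix.transpose_mul, Matrix.transpose_transpose]
    have hQt : ((X * Xᵀ) ^ 2 ^ k)ᵀ = (X * Xᵀ) ^ 2 ^ k := by
      rw [Matrix.transpose_pow, Matrix.transpose_mul, Matrix.transpose_transpose]
    have heq : ((X * Xᵀ) ^ 2 ^ k * ((X * Xᵀ) ^ 2 ^ k)).trace
        = ((Xᵀ * X) ^ 2 ^ k * ((Xᵀ * X) ^ 2 ^ k)).trace := by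
      rw [← pow_add, ← pow_add]
      exact trace_pow_mul_comm X Xᵀ _
    have h3 : ((Xᵀ * X) ^ 2 ^ k * (X * Xᵀ) ^ 2 ^ k).trace
        ≤ ((Xᵀ * X) ^ 2 ^ k * (Xᵀ * X) ^ 2 ^ k).trace :=
      trace_mul_le_of_symm hPt hQt heq
    have e4 : (Xᵀ * X) ^ 2 ^ k * (Xᵀ * X) ^ 2 ^ k = (Xᵀ * X) ^ 2 ^ (k+1) := by
      rw [← pow_add]; congr 1; rw [pow_succ]; ring
    calc (X ^ 2 ^ (k+1+1)).trace = ((X * X) ^ 2 ^ (k+1)).trace := e0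
      _ ≤ (((X * X)ᵀ * (X * X)) ^ 2 ^ k).trace := h1
      _ = (((Xᵀ * X) * (X * Xᵀ)) ^ 2 ^ k).trace := hcyc
      _ ≤ ((Xᵀ * X) ^ 2 ^ k * (X * Xᵀ) ^ 2 ^ k).trace := h2
      _ ≤ ((Xᵀ * X) ^ 2 ^ k * (Xᵀ * X) ^ 2 ^ k).trace := h3
      _ = ((Xᵀ * X) ^ 2 ^ (k+1)).trace := by rw [e4]



section Banach

variable {𝔸 : Type*} [NormedRing 𝔸] [NormedAlgebra ℝ 𝔸] [CompleteSpace 𝔸] [NormOneClass 𝔸]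

lemma real_exp_tsum (r : ℝ) : Real.exp r = ∑' m : ℕ, r ^ m / m.factorial := by
  rw [Real.exp_eq_exp_ℝ, exp_eq_tsum_div]

lemma norm_exp_le' (x : 𝔸) : ‖exp x‖ ≤ Real.exp ‖x‖ := by
  rw [exp_eq_tsum ℝ, real_exp_tsum]
  refine tsum_of_norm_bounded (Real.summable_pow_div_factorial ‖x‖).hasSum fun m => ?_
  rw [norm_smul]
  have h1 : ‖((m.factorial : ℝ)⁻¹ : ℝ)‖ = ((m.factorial : ℝ))⁻¹ := by
    rw [Real.norm_eq_abs, abs_of_nonneg (by positivity)]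
  rw [h1, div_eq_inv_mul]
  exact mul_le_mul_of_nonneg_left (norm_pow_le x m) (by positivity)

lemma norm_exp_sub_one_sub_le (x : 𝔸) :
    ‖exp x - 1 - x‖ ≤ ‖x‖ ^ 2 * Real.exp ‖x‖ := by
  have hsum : Summable fun m : ℕ => ((m.factorial : ℝ)⁻¹) • x ^ m :=
    expSeries_summable' (𝕂 := ℝ) x
  have hsum1 : Summable fun m : ℕ => (((m+1).factorial : ℝ)⁻¹) • x ^ (m+1) :=
    ((summable_nat_add_iff 1).2 hsum)
  have h0 : exp x = 1 + x + ∑' m : ℕ, (((m+2).factorial : ℝ)⁻¹) • x ^ (m+2) := by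
    simp only [exp_eq_tsum ℝ]
    rw [Summable.tsum_eq_zero_add hsum, Summable.tsum_eq_zero_add hsum1]
    simp [add_assoc]
  have heq : exp x - 1 - x = ∑' m : ℕ, (((m+2).factorial : ℝ)⁻¹) • x ^ (m+2) := by
    rw [h0]; abel
  rw [heq]
  have hgs : HasSum (fun m : ℕ => ‖x‖ ^ 2 * (‖x‖ ^ m / m.factorial)) (‖x‖ ^ 2 * Real.exp ‖x‖) := by
    rw [real_exp_tsum]
    exact (Real.summable_pow_div_factorial ‖x‖).hasSum.mul_left _
  refine tsum_of_norm_bounded hgs fun m => ?_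
  rw [norm_smul]
  have h1 : ‖(((m+2).factorial : ℝ)⁻¹ : ℝ)‖ = (((m+2).factorial : ℝ))⁻¹ := by
    rw [Real.norm_eq_abs, abs_of_nonneg (by positivity)]
  rw [h1]
  have h2 : ‖x ^ (m+2)‖ ≤ ‖x‖ ^ (m + 2) := norm_pow_le x (m+2)
  have h3 : (((m+2).factorial : ℝ))⁻¹ ≤ ((m.factorial : ℝ))⁻¹ := by
    apply inv_anti₀ (by positivity)
    exact_mod_cast Nat.factorial_le (by omega)
  calc (((m+2).factorial : ℝ))⁻¹ * ‖x ^ (m+2)‖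
      ≤ ((m.factorial : ℝ))⁻¹ * ‖x‖ ^ (m+2) := by
        apply mul_le_mul h3 h2 (norm_nonneg _) (by positivity)
    _ = ‖x‖ ^ 2 * (‖x‖ ^ m / m.factorial) := by
        rw [pow_add]; ring

lemma norm_pow_sub_pow_le' {X Y : 𝔸} {r : ℝ} (hX : ‖X‖ ≤ r) (hY : ‖Y‖ ≤ r) (hr : 1 ≤ r) :
    ∀ N : ℕ, ‖Y ^ N - X ^ N‖ ≤ N * r ^ N * ‖Y - X‖ := by
  intro N
  induction N with
  | zero => simp
  | succ N ih =>
    have hr0 : (0:ℝ) ≤ r := le_trans zero_le_one hr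
    have key : Y ^ (N+1) - X ^ (N+1) = Y ^ N * (Y - X) + (Y ^ N - X ^ N) * X := by
      rw [pow_succ, pow_succ]; noncomm_ring
    have hYN : ‖Y ^ N‖ ≤ r ^ N := (norm_pow_le Y N).trans (pow_le_pow_left₀ (norm_nonneg _) hY N)
    calc ‖Y ^ (N+1) - X ^ (N+1)‖
        ≤ ‖Y ^ N * (Y - X)‖ + ‖(Y ^ N - X ^ N) * X‖ := by rw [key]; exact norm_add_le _ _
      _ ≤ ‖Y ^ N‖ * ‖Y - X‖ + ‖Y ^ N - X ^ N‖ * ‖X‖ := by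
          gcongr <;> [exact norm_mul_le _ _; exact norm_mul_le _ _]
      _ ≤ r ^ N * ‖Y - X‖ + (N * r ^ N * ‖Y - X‖) * r := by
          gcongr
      _ ≤ r ^ (N+1) * ‖Y - X‖ + (N * r ^ (N+1) * ‖Y - X‖) := by
          rw [pow_succ]
          have h1 : r ^ N ≤ r ^ N * r := le_mul_of_one_le_right (by positivity) hr
          nlinarith [norm_nonneg (Y - X), mul_nonneg (mul_nonneg (Nat.cast_nonneg N) (pow_nonneg (le_trans zero_le_one hr) N)) (norm_nonneg (Y - X)), pow_nonneg (le_trans zero_le_one hr) N]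
      _ = (N+1 : ℕ) * r ^ (N+1) * ‖Y - X‖ := by push_cast; ring

end Banach

section Trotter

attribute [local instance] Matrix.linftyOpNormedAddCommGroup Matrix.linftyOpNormedRing
  Matrix.linftyOpNormedAlgebra

variable {n : ℕ} [Nonempty (Fin n)]

local notation "MatT" => Matrix (Fin n) (Fin n) ℝ

noncomputable def Cst (A B : MatT) : ℝ :=
  (‖A‖ + ‖B‖) ^ 2 * Real.exp (‖A‖ + ‖B‖) + ‖A‖ ^ 2 * Real.exp ‖A‖ * Real.exp ‖B‖
    + (1 + ‖A‖) * (‖B‖ ^ 2 * Real.exp ‖B‖) + ‖A‖ * ‖B‖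

lemma trotter_step (A B : MatT) {t : ℝ} (ht0 : 0 ≤ t) (ht1 : t ≤ 1) :
    ‖exp (t • A) * exp (t • B) - exp (t • (A + B))‖ ≤ t ^ 2 * Cst A B := by
  have ha : (0:ℝ) ≤ ‖A‖ := norm_nonneg A
  have hb : (0:ℝ) ≤ ‖B‖ := norm_nonneg B
  set Ra : MatT := exp (t • A) - 1 - t • A with hRa
  set Rb : MatT := exp (t • B) - 1 - t • B with hRb
  set Rab : MatT := exp (t • (A + B)) - 1 - t • (A + B) with hRab
  have hid : exp (t • A) * exp (t • B) - exp (t • (A + B))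
      = Ra * exp (t • B) + (1 + t • A) * Rb + (t * t) • (A * B) - Rab := by
    rw [hRa, hRb, hRab]
    simp only [sub_mul, mul_sub, one_mul, mul_one, smul_mul_assoc, mul_smul_comm, smul_smul,
      smul_add, add_mul]
    abel
  -- norms of pieces
  have hnta : ‖t • A‖ = t * ‖A‖ := by rw [norm_smul, Real.norm_eq_abs, abs_of_nonneg ht0]
  have hntb : ‖t • B‖ = t * ‖B‖ := by rw [norm_smul, Real.norm_eq_abs, abs_of_nonneg ht0]
  have htA : ‖t • A‖ ≤ ‖A‖ := by rw [hnta]; nlinarith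
  have htB : ‖t • B‖ ≤ ‖B‖ := by rw [hntb]; nlinarith
  have hRa' : ‖Ra‖ ≤ t ^ 2 * (‖A‖ ^ 2 * Real.exp ‖A‖) := by
    refine (norm_exp_sub_one_sub_le (t • A)).trans ?_
    have h1 : ‖t • A‖ ^ 2 ≤ t ^ 2 * ‖A‖ ^ 2 := by rw [hnta]; nlinarith
    have h2 : Real.exp ‖t • A‖ ≤ Real.exp ‖A‖ := Real.exp_le_exp.2 htA
    nlinarith [Real.exp_pos ‖t • A‖, Real.exp_pos ‖A‖, sq_nonneg ‖t • A‖]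
  have hRb' : ‖Rb‖ ≤ t ^ 2 * (‖B‖ ^ 2 * Real.exp ‖B‖) := by
    refine (norm_exp_sub_one_sub_le (t • B)).trans ?_
    have h1 : ‖t • B‖ ^ 2 ≤ t ^ 2 * ‖B‖ ^ 2 := by rw [hntb]; nlinarith
    have h2 : Real.exp ‖t • B‖ ≤ Real.exp ‖B‖ := Real.exp_le_exp.2 htB
    nlinarith [Real.exp_pos ‖t • B‖, Real.exp_pos ‖B‖, sq_nonneg ‖t • B‖]
  have hRab' : ‖Rab‖ ≤ t ^ 2 * ((‖A‖ + ‖B‖) ^ 2 * Real.exp (‖A‖ + ‖B‖)) := by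
    refine (norm_exp_sub_one_sub_le (t • (A + B))).trans ?_
    have hab : ‖t • (A + B)‖ ≤ t * (‖A‖ + ‖B‖) := by
      rw [norm_smul, Real.norm_eq_abs, abs_of_nonneg ht0]
      exact mul_le_mul_of_nonneg_left (norm_add_le A B) ht0
    have hab2 : ‖t • (A + B)‖ ≤ ‖A‖ + ‖B‖ := hab.trans (by nlinarith)
    have h1 : ‖t • (A + B)‖ ^ 2 ≤ t ^ 2 * (‖A‖ + ‖B‖) ^ 2 := by
      have := norm_nonneg (t • (A + B)); nlinarith
    have h2 : Real.exp ‖t • (A + B)‖ ≤ Real.exp (‖A‖ + ‖B‖) := Real.exp_le_exp.2 hab2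
    nlinarith [Real.exp_pos ‖t • (A + B)‖, Real.exp_pos (‖A‖ + ‖B‖),
      sq_nonneg ‖t • (A + B)‖]
  have hEB : ‖exp (t • B)‖ ≤ Real.exp ‖B‖ :=
    (norm_exp_le' _).trans (Real.exp_le_exp.2 htB)
  have hone : ‖(1 : MatT) + t • A‖ ≤ 1 + ‖A‖ := by
    refine (norm_add_le _ _).trans ?_
    rw [norm_one]
    gcongr
  have hmul : ‖(t * t) • (A * B)‖ ≤ t ^ 2 * (‖A‖ * ‖B‖) := by
    rw [norm_smul, Real.norm_eq_abs, abs_of_nonneg (mul_nonneg ht0 ht0), ← sq]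
    exact mul_le_mul_of_nonneg_left (norm_mul_le A B) (sq_nonneg t)
  rw [hid, Cst]
  have step1 : ‖Ra * exp (t • B) + (1 + t • A) * Rb + (t * t) • (A * B) - Rab‖
      ≤ ‖Ra * exp (t • B)‖ + ‖(1 + t • A) * Rb‖ + ‖(t * t) • (A * B)‖ + ‖Rab‖ :=
    (norm_sub_le _ _).trans (add_le_add_left ((norm_add_le _ _).trans
      (add_le_add_left (norm_add_le _ _) _)) _)
  have step2a : ‖Ra * exp (t • B)‖ ≤ (t ^ 2 * (‖A‖ ^ 2 * Real.exp ‖A‖)) * Real.exp ‖B‖ :=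
    (norm_mul_le _ _).trans (mul_le_mul hRa' hEB (norm_nonneg _) (by positivity))
  have step2b : ‖(1 + t • A) * Rb‖ ≤ (1 + ‖A‖) * (t ^ 2 * (‖B‖ ^ 2 * Real.exp ‖B‖)) :=
    (norm_mul_le _ _).trans (mul_le_mul hone hRb' (norm_nonneg _) (by positivity))
  refine (step1.trans (add_le_add (add_le_add (add_le_add step2a step2b) hmul) hRab')).trans
    (le_of_eq ?_)
  ring


lemma exp_inv_smul_pow {n : ℕ} (M : Matrix (Fin n) (Fin n) ℝ) (N : ℕ) (hN : N ≠ 0) :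
    (exp (((N : ℝ))⁻¹ • M)) ^ N = exp M := by
  rw [← Matrix.exp_nsmul, ← Nat.cast_smul_eq_nsmul ℝ, smul_smul,
    mul_inv_cancel₀ (by exact_mod_cast hN), one_smul]

lemma posSemidef_exp {n : ℕ} (M : Matrix (Fin n) (Fin n) ℝ) (hM : M.IsSymm) :
    (exp M).PosSemidef := by
  have h2 : exp M = exp ((2 : ℕ) • ((2 : ℝ)⁻¹ • M)) := by
    congr 1
    rw [← Nat.cast_smul_eq_nsmul ℝ, smul_smul]
    norm_num
  rw [h2, Matrix.exp_nsmul]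
  have hsymm : (exp ((2 : ℝ)⁻¹ • M)).IsSymm := Matrix.IsSymm.exp (hM.smul _)
  rw [sq]
  nth_rewrite 1 [← hsymm]
  have := Matrix.posSemidef_conjTranspose_mul_self (exp ((2 : ℝ)⁻¹ • M))
  rwa [Matrix.conjTranspose_eq_transpose_of_trivial] at this

lemma Cst_nonneg {n : ℕ} [Nonempty (Fin n)] (A B : Matrix (Fin n) (Fin n) ℝ) :
    0 ≤ Cst A B := by
  letI : NormedAddCommGroup (Matrix (Fin n) (Fin n) ℝ) := Matrix.linftyOpNormedAddCommGroup
  unfold Cst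
  positivity

lemma trotter_pow_bound {n : ℕ} [Nonempty (Fin n)] (A B : Matrix (Fin n) (Fin n) ℝ)
    {N : ℕ} (hN : 1 ≤ N) :
    ‖(exp (((N : ℝ))⁻¹ • A) * exp (((N : ℝ))⁻¹ • B)) ^ N - exp (A + B)‖
      ≤ Real.exp (‖A‖ + ‖B‖) * Cst A B / N := by
  have hN0 : (0:ℝ) < N := by exact_mod_cast hN
  set t : ℝ := ((N : ℝ))⁻¹ with hts
  have ht0 : 0 ≤ t := by positivity
  have ht1 : t ≤ 1 := inv_le_one_of_one_le₀ (by exact_mod_cast hN)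
  have hXN : (exp (t • (A + B))) ^ N = exp (A + B) :=
    exp_inv_smul_pow (A + B) N (by omega)
  set r : ℝ := Real.exp (t * (‖A‖ + ‖B‖)) with hrs
  have hr1 : 1 ≤ r := Real.one_le_exp (by positivity)
  have hX : ‖exp (t • (A + B))‖ ≤ r := by
    refine (norm_exp_le' _).trans (Real.exp_le_exp.2 ?_)
    rw [norm_smul, Real.norm_eq_abs, abs_of_nonneg ht0]
    exact mul_le_mul_of_nonneg_left (norm_add_le A B) ht0
  have hY : ‖exp (t • A) * exp (t • B)‖ ≤ r := by
    refine (norm_mul_le _ _).trans ?_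
    have h1 : ‖exp (t • A)‖ ≤ Real.exp (t * ‖A‖) := by
      refine (norm_exp_le' _).trans (Real.exp_le_exp.2 (le_of_eq ?_))
      rw [norm_smul, Real.norm_eq_abs, abs_of_nonneg ht0]
    have h2 : ‖exp (t • B)‖ ≤ Real.exp (t * ‖B‖) := by
      refine (norm_exp_le' _).trans (Real.exp_le_exp.2 (le_of_eq ?_))
      rw [norm_smul, Real.norm_eq_abs, abs_of_nonneg ht0]
    calc ‖exp (t • A)‖ * ‖exp (t • B)‖ ≤ Real.exp (t * ‖A‖) * Real.exp (t * ‖B‖) := by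
          exact mul_le_mul h1 h2 (norm_nonneg _) (Real.exp_nonneg _)
      _ = r := by rw [hrs, ← Real.exp_add]; ring_nf
  have hrN : r ^ N = Real.exp (‖A‖ + ‖B‖) := by
    rw [hrs, hts, ← Real.exp_nat_mul]
    congr 1
    field_simp
  have hpow := norm_pow_sub_pow_le' hX hY hr1 N
  rw [hXN] at hpow
  refine hpow.trans ?_
  rw [hrN]
  have hstep := trotter_step A B ht0 ht1
  calc (N : ℝ) * Real.exp (‖A‖ + ‖B‖) * ‖exp (t • A) * exp (t • B) - exp (t • (A + B))‖
      ≤ (N : ℝ) * Real.exp (‖A‖ + ‖B‖) * (t ^ 2 * Cst A B) := by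
        have hc : (0:ℝ) ≤ (N : ℝ) * Real.exp (‖A‖ + ‖B‖) := by positivity
        exact mul_le_mul_of_nonneg_left hstep hc
    _ = Real.exp (‖A‖ + ‖B‖) * Cst A B / N := by
        rw [hts]; field_simp

lemma tendsto_trace_trotter {n : ℕ} [Nonempty (Fin n)] (A B : Matrix (Fin n) (Fin n) ℝ) :
    Filter.Tendsto
      (fun k : ℕ =>
        ((exp ((((2 ^ k : ℕ) : ℝ))⁻¹ • A) * exp ((((2 ^ k : ℕ) : ℝ))⁻¹ • B)) ^ (2 ^ k : ℕ)).trace)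
      Filter.atTop (nhds ((exp (A + B)).trace)) := by
  have htr : Continuous fun M : Matrix (Fin n) (Fin n) ℝ => M.trace :=
    Continuous.matrix_trace continuous_id
  refine (htr.tendsto _).comp ?_
  rw [← tendsto_sub_nhds_zero_iff]
  apply squeeze_zero_norm
    (a := fun k : ℕ => Real.exp (‖A‖ + ‖B‖) * Cst A B / ((2 : ℝ) ^ k))
  · intro k
    have := trotter_pow_bound A B (N := 2 ^ k) Nat.one_le_two_pow
    simpa [Nat.cast_pow] using this
  · have h0 : Filter.Tendsto (fun k : ℕ => ((2 : ℝ)⁻¹) ^ k) Filter.atTop (nhds 0) :=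
      tendsto_pow_atTop_nhds_zero_of_lt_one (by norm_num) (by norm_num)
    have := h0.const_mul (Real.exp (‖A‖ + ‖B‖) * Cst A B)
    rw [mul_zero] at this
    refine this.congr fun k => ?_
    rw [div_eq_mul_inv, inv_pow]

end Trotter


end GTaux

/-- Golden–Thompson inequality for symmetric PSD matrices:
`trace (exp (A + B)) ≤ trace (exp A * exp B)`. -/
theorem golden_thompson {n : ℕ} (A B : Matrix (Fin n) (Fin n) ℝ)
    (hA : A.PosSemidef) (hB : B.PosSemidef) :
    (exp (A + B)).trace ≤ (exp A * exp B).trace := by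
  rcases Nat.eq_zero_or_pos n with rfl | hn
  · have h : exp (A + B) = exp A * exp B := by
      ext i j
      exact i.elim0
    rw [h]
  · haveI : Nonempty (Fin n) := ⟨⟨0, hn⟩⟩
    have hAs : A.IsSymm := GTaux.transpose_eq_of_posSemidef hA
    have hBs : B.IsSymm := GTaux.transpose_eq_of_posSemidef hB
    refine le_of_tendsto (GTaux.tendsto_trace_trotter A B)
      (Filter.Eventually.of_forall fun k => ?_)
    set t : ℝ := (((2 ^ k : ℕ) : ℝ))⁻¹ with hts
    have hC : (exp (t • A)).PosSemidef := GTaux.posSemidef_exp _ (hAs.smul t)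
    have hD : (exp (t • B)).PosSemidef := GTaux.posSemidef_exp _ (hBs.smul t)
    have hkey := (GTaux.key k).2 (exp (t • A)) (exp (t • B)) hC hD
    have hCA : (exp (t • A)) ^ (2 ^ k) = exp A :=
      GTaux.exp_inv_smul_pow A _ (pow_ne_zero k two_ne_zero)
    have hCB : (exp (t • B)) ^ (2 ^ k) = exp B :=
      GTaux.exp_inv_smul_pow B _ (pow_ne_zero k two_ne_zero)
    rw [hCA, hCB] at hkey
    exact hkey
end
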